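/- arXiv:2208.08257 — 13 statements merged into one kernel-verified Lean document; each statement's English description precedes it below -/
import Mathlib

section
/- Let G be a hypergraph containing a block B of size b ≥ 3, i.e., b nodes v_1, …, v_b of G together with b hyperedges of G, the i-th of which equals B ∖ {v_i}. In every k-way partitioning of G in which B intersects more than one part, at least b − 1 of the b hyperedges of the block are cut; in particular, both the cut-net cost and the connectivity cost of the partitioning are at least b − 1. -/
/-!
If `P` is constant on two distinct erasures `B.erase x` and `B.erase y` of a block with at least
three nodes, then these erasures cover `B` and share a third node, so `P` is constant on all of `B`.
Hence, once `B` is cut, at most one of its `b` hyperedges is uncut. Distinct nodes give distinct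
hyperedges, and every cut hyperedge contributes at least one to the connectivity cost.
-/

open Finset

section

variable {α β ι : Type*} [DecidableEq α] [DecidableEq β]

lemma eq_of_card_image_erase_le_one {s : Finset α} (hs : 3 ≤ #s) {f : α → β}
    (hf : 1 < #(s.image f)) {x y : α} (hfx : #((s.erase x).image f) ≤ 1)
    (hfy : #((s.erase y).image f) ≤ 1) : x = y := by
  by_contra hxy
  have hconst {t : Finset α} (ht : #(t.image f) ≤ 1) {a c : α} (ha : a ∈ t) (hc : c ∈ t) :
      f a = f c :=
    card_le_one.mp ht _ (mem_image_of_mem f ha) _ (mem_image_of_mem f hc)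
  obtain ⟨z, hz⟩ : ((s.erase x).erase y).Nonempty := by
    rw [← card_pos]
    have := pred_card_le_card_erase (s := s) (a := x)
    have := pred_card_le_card_erase (s := s.erase x) (a := y)
    omega
  have hzx := mem_of_mem_erase hz
  have hzy : z ∈ s.erase y := mem_erase.mpr ⟨ne_of_mem_erase hz, mem_of_mem_erase hzx⟩
  have hcover : ∀ w ∈ s, f w = f z := by
    intro w hw
    by_cases hwx : w = x
    · subst hwx
      exact hconst hfy (mem_erase.mpr ⟨hxy, hw⟩) hzy
    · exact hconst hfx (mem_erase.mpr ⟨hwx, hw⟩) hzx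
  refine hf.not_ge (card_le_one.mpr ?_)
  simp only [mem_image]
  rintro _ ⟨a, ha, rfl⟩ _ ⟨c, hc, rfl⟩
  rw [hcover a ha, hcover c hc]

lemma card_filter_one_lt_le_sum_tsub_one (s : Finset ι) (g : ι → ℕ) :
    #(s.filter (1 < g ·)) ≤ ∑ i ∈ s, (g i - 1) := by
  rw [card_filter]
  gcongr with i
  split_ifs <;> omega

end

/-- **Block splitting lemma.**
A *block* of size `b` consists of `b` nodes `v 0, …, v (b-1)` together with the `b`
hyperedges `B \ {v i}` (where `B` is the set of all block nodes).  If in a `k`-way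
partitioning `P` the block intersects more than one part, then at least `b - 1` of the
`b` block hyperedges are cut; in particular both the cut-net cost and the connectivity
cost of the partitioning are at least `b - 1`. -/
theorem block_split_cost {α : Type*} [DecidableEq α] {k b : ℕ} (hb : 3 ≤ b)
    (E : Finset (Finset α)) (v : Fin b → α) (hv : Function.Injective v)
    (hE : ∀ i : Fin b, (Finset.univ.image v) \ {v i} ∈ E)
    (P : α → Fin k)
    (hsplit : ∃ i j : Fin b, P (v i) ≠ P (v j)) :
    b - 1 ≤ (Finset.univ.filter (fun i : Fin b =>
        1 < ((((Finset.univ.image v) \ {v i}).image P).card))).card ∧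
    b - 1 ≤ (E.filter (fun e => 1 < (e.image P).card)).card ∧
    b - 1 ≤ ∑ e ∈ E, ((e.image P).card - 1) := by
  set B := univ.image v
  have hB : #B = b := by simp [B, card_image_of_injective _ hv]
  have hcut : 1 < #(B.image P) := by
    obtain ⟨i, j, hij⟩ := hsplit
    exact one_lt_card.mpr ⟨_, mem_image_of_mem P (mem_image_of_mem v (mem_univ i)),
      _, mem_image_of_mem P (mem_image_of_mem v (mem_univ j)), hij⟩
  have hblock : b - 1 ≤ #(univ.filter fun i => 1 < #((B \ {v i}).image P)) := by
    have huncut : #(univ.filter fun i => ¬ 1 < #((B \ {v i}).image P)) ≤ 1 := by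
      refine card_le_one.mpr fun i hi j hj => hv ?_
      simp only [mem_filter, not_lt, sdiff_singleton_eq_erase] at hi hj
      exact eq_of_card_image_erase_le_one (hB ▸ hb) hcut hi.2 hj.2
    have := card_filter_add_card_filter_not (s := (univ : Finset (Fin b)))
      (fun i => 1 < #((B \ {v i}).image P))
    rw [card_univ, Fintype.card_fin] at this
    omega
  have hedges : b - 1 ≤ #(E.filter fun e => 1 < #(e.image P)) := by
    refine hblock.trans (card_le_card_of_injOn (fun i => B \ {v i}) ?_ ?_)
    · intro i hi
      simp only [coe_filter, Set.mem_ofPred_eq] at hi ⊢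
      exact ⟨hE i, hi.2⟩
    · intro i _ j _ hij
      simp only [sdiff_singleton_eq_erase] at hij
      exact hv (B.erase_injOn (mem_image_of_mem v (mem_univ i))
        (mem_image_of_mem v (mem_univ j)) hij)
  exact ⟨hblock, hedges, hedges.trans (card_filter_one_lt_le_sum_tsub_one E _)⟩
end

section
/- Consider any 2-coloring of the nodes of an ℓ×ℓ grid gadget with colors red and blue, and let t₀ be the number of nodes of the less frequent color. Then the number of cut hyperedges (rows and columns of the grid containing nodes of both colors) is at least √t₀. -/
open Finset

theorem grid_key (ℓ : ℕ) (c : Fin ℓ × Fin ℓ → Bool) (m : Bool)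
    (hmin : (Finset.univ.filter fun p : Fin ℓ × Fin ℓ => c p = m).card ≤
            (Finset.univ.filter fun p : Fin ℓ × Fin ℓ => c p = !m).card) :
    (Finset.univ.filter fun p : Fin ℓ × Fin ℓ => c p = m).card ≤
    ((Finset.univ.filter fun i : Fin ℓ => ∃ j j' : Fin ℓ, c (i, j) ≠ c (i, j')).card
      + (Finset.univ.filter fun j : Fin ℓ => ∃ i i' : Fin ℓ, c (i, j) ≠ c (i', j)).card)^2 := by
  classical
  set R := Finset.univ.filter fun i : Fin ℓ => ∃ j j' : Fin ℓ, c (i, j) ≠ c (i, j') with hRdef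
  set C := Finset.univ.filter fun j : Fin ℓ => ∃ i i' : Fin ℓ, c (i, j) ≠ c (i', j) with hCdef
  have rowconst : ∀ i : Fin ℓ, i ∉ R → ∀ j j' : Fin ℓ, c (i, j) = c (i, j') := by
    intro i hi j j'
    by_contra h
    exact hi (mem_filter.2 ⟨mem_univ _, j, j', h⟩)
  have colconst : ∀ j : Fin ℓ, j ∉ C → ∀ i i' : Fin ℓ, c (i, j) = c (i', j) := by
    intro j hj i i'
    by_contra h
    exact hj (mem_filter.2 ⟨mem_univ _, i, i', h⟩)
  have htotal : (Finset.univ.filter fun p : Fin ℓ × Fin ℓ => c p = m).card +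
      (Finset.univ.filter fun p : Fin ℓ × Fin ℓ => c p = !m).card = ℓ * ℓ := by
    have : (Finset.univ.filter fun p : Fin ℓ × Fin ℓ => c p = !m) =
        (Finset.univ.filter fun p : Fin ℓ × Fin ℓ => ¬ (c p = m)) := by
      apply filter_congr
      intro p _
      cases m <;> cases h : c p <;> simp
    rw [this, card_filter_add_card_filter_not]
    simp
  have h2 : 2 * (Finset.univ.filter fun p : Fin ℓ × Fin ℓ => c p = m).card ≤ ℓ * ℓ := by
    omega
  by_cases hr : ∃ i : Fin ℓ, ∀ j, c (i, j) = m
  · by_cases hc : ∃ j : Fin ℓ, ∀ i, c (i, j) = m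
    · -- both a full row and full column of color m
      set A := Finset.univ.filter fun i : Fin ℓ => ∀ j, c (i, j) = m with hAdef
      set B := Finset.univ.filter fun j : Fin ℓ => ∀ i, c (i, j) = m with hBdef
      obtain ⟨i₀, hi₀⟩ := hr
      obtain ⟨j₀, hj₀⟩ := hc
      have hRA : R.card + A.card = ℓ := by
        have hA : A = Finset.univ.filter fun i : Fin ℓ =>
            ¬ ∃ j j' : Fin ℓ, c (i, j) ≠ c (i, j') := by
          ext i
          simp only [hAdef, mem_filter, mem_univ, true_and, not_exists, not_not]
          constructor
          · intro h j j'
            rw [h j, h j']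
          · intro h j
            rw [h j j₀, hj₀ i]
        rw [hRdef, hA, card_filter_add_card_filter_not]
        simp
      have hCB : C.card + B.card = ℓ := by
        have hB : B = Finset.univ.filter fun j : Fin ℓ =>
            ¬ ∃ i i' : Fin ℓ, c (i, j) ≠ c (i', j) := by
          ext j
          simp only [hBdef, mem_filter, mem_univ, true_and, not_exists, not_not]
          constructor
          · intro h i i'
            rw [h i, h i']
          · intro h i
            rw [h i i₀, hi₀ j]
        rw [hCdef, hB, card_filter_add_card_filter_not]
        simp
      have hsub : (A ×ˢ Finset.univ) ∪ (Finset.univ ×ˢ B) ⊆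
          (Finset.univ.filter fun p : Fin ℓ × Fin ℓ => c p = m) := by
        intro p hp
        rcases mem_union.1 hp with h | h
        · rcases mem_product.1 h with ⟨h1, _⟩
          exact mem_filter.2 ⟨mem_univ _, (mem_filter.1 h1).2 p.2⟩
        · rcases mem_product.1 h with ⟨_, h2⟩
          exact mem_filter.2 ⟨mem_univ _, (mem_filter.1 h2).2 p.1⟩
      have hinter : (A ×ˢ Finset.univ) ∩ (Finset.univ ×ˢ B) = A ×ˢ B := by
        ext p
        simp [mem_product, and_comm]
      have hcard := Finset.card_union_add_card_inter (A ×ˢ Finset.univ) (Finset.univ ×ˢ B)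
      rw [hinter] at hcard
      have h1 : (Finset.univ.filter fun p : Fin ℓ × Fin ℓ => c p = m).card + A.card * B.card ≥
          A.card * ℓ + ℓ * B.card := by
        have := Finset.card_le_card hsub
        simp only [card_product, card_univ, Fintype.card_fin] at hcard
        omega
      zify at h1 h2 hRA hCB ⊢
      nlinarith [h1, h2, hRA, hCB, sq_nonneg ((R.card : ℤ) - C.card), sq_nonneg ((R.card : ℤ) + C.card)]
    · -- full row exists, no full column: every column is cut
      obtain ⟨i₀, hi₀⟩ := hr
      have hCuniv : C = Finset.univ := by
        apply eq_univ_of_forall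
        intro j
        by_contra hj
        exact hc ⟨j, fun i => by rw [colconst j hj i i₀, hi₀ j]⟩
      have hNle : (Finset.univ.filter fun p : Fin ℓ × Fin ℓ => c p = m).card ≤ ℓ * ℓ := by
        calc _ ≤ (Finset.univ : Finset (Fin ℓ × Fin ℓ)).card := card_le_card (filter_subset _ _)
        _ = ℓ * ℓ := by simp
      have hCl : C.card = ℓ := by rw [hCuniv]; simp
      calc _ ≤ ℓ * ℓ := hNle
      _ = C.card ^ 2 := by rw [hCl]; ring
      _ ≤ (R.card + C.card)^2 := Nat.pow_le_pow_left (Nat.le_add_left _ _) 2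
  · by_cases hc : ∃ j : Fin ℓ, ∀ i, c (i, j) = m
    · -- full column exists, no full row: every row is cut
      obtain ⟨j₀, hj₀⟩ := hc
      have hRuniv : R = Finset.univ := by
        apply eq_univ_of_forall
        intro i
        by_contra hi
        exact hr ⟨i, fun j => by rw [rowconst i hi j j₀, hj₀ i]⟩
      have hNle : (Finset.univ.filter fun p : Fin ℓ × Fin ℓ => c p = m).card ≤ ℓ * ℓ := by
        calc _ ≤ (Finset.univ : Finset (Fin ℓ × Fin ℓ)).card := card_le_card (filter_subset _ _)
        _ = ℓ * ℓ := by simp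
      have hRl : R.card = ℓ := by rw [hRuniv]; simp
      calc _ ≤ ℓ * ℓ := hNle
      _ = R.card ^ 2 := by rw [hRl]; ring
      _ ≤ (R.card + C.card)^2 := Nat.pow_le_pow_left (Nat.le_add_right _ _) 2
    · -- no full row, no full column: every m-node lies in a cut row and a cut column
      have hsub : (Finset.univ.filter fun p : Fin ℓ × Fin ℓ => c p = m) ⊆ R ×ˢ C := by
        intro p hp
        have hpm : c p = m := (mem_filter.1 hp).2
        refine mem_product.2 ⟨?_, ?_⟩
        · by_contra h
          refine hr ⟨p.1, fun j => ?_⟩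
          rw [rowconst p.1 h j p.2, hpm]
        · by_contra h
          refine hc ⟨p.2, fun i => ?_⟩
          rw [colconst p.2 h i p.1, hpm]
      have := Finset.card_le_card hsub
      simp only [card_product] at this
      nlinarith [this]

/-- **Grid gadget cut bound.**  In any red/blue coloring `c` of the `ℓ×ℓ` grid gadget
(whose hyperedges are the `ℓ` rows and `ℓ` columns), if `t₀` is the number of nodes of
the less frequent color, then the number of cut hyperedges (rows and columns containing
both colors) is at least `√t₀`. -/
theorem grid_cut_lower_bound (ℓ : ℕ) (c : Fin ℓ × Fin ℓ → Bool) :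
    Real.sqrt ((min ((Finset.univ.filter fun p : Fin ℓ × Fin ℓ => c p = true).card)
                    ((Finset.univ.filter fun p : Fin ℓ × Fin ℓ => c p = false).card) : ℕ)) ≤
    (((Finset.univ.filter fun i : Fin ℓ => ∃ j j' : Fin ℓ, c (i, j) ≠ c (i, j')).card
      + (Finset.univ.filter fun j : Fin ℓ => ∃ i i' : Fin ℓ, c (i, j) ≠ c (i', j)).card : ℕ) : ℝ) := by
  have key : (min ((Finset.univ.filter fun p : Fin ℓ × Fin ℓ => c p = true).card)
                  ((Finset.univ.filter fun p : Fin ℓ × Fin ℓ => c p = false).card)) ≤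
      ((Finset.univ.filter fun i : Fin ℓ => ∃ j j' : Fin ℓ, c (i, j) ≠ c (i, j')).card
        + (Finset.univ.filter fun j : Fin ℓ => ∃ i i' : Fin ℓ, c (i, j) ≠ c (i', j)).card)^2 := by
    rcases le_total ((Finset.univ.filter fun p : Fin ℓ × Fin ℓ => c p = true).card)
        ((Finset.univ.filter fun p : Fin ℓ × Fin ℓ => c p = false).card) with h | h
    · rw [min_eq_left h]
      exact grid_key ℓ c true (by simpa using h)
    · rw [min_eq_right h]
      exact grid_key ℓ c false (by simpa using h)
  have h1 : ((min ((Finset.univ.filter fun p : Fin ℓ × Fin ℓ => c p = true).card)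
                  ((Finset.univ.filter fun p : Fin ℓ × Fin ℓ => c p = false).card) : ℕ) : ℝ) ≤
      (((Finset.univ.filter fun i : Fin ℓ => ∃ j j' : Fin ℓ, c (i, j) ≠ c (i, j')).card
        + (Finset.univ.filter fun j : Fin ℓ => ∃ i i' : Fin ℓ, c (i, j) ≠ c (i', j)).card : ℕ) : ℝ)^2 := by
    exact_mod_cast key
  calc Real.sqrt _ ≤ Real.sqrt (_ ^ 2) := Real.sqrt_le_sqrt h1
  _ = _ := Real.sqrt_sq (by positivity)
end

section
/- Let H be a hypergraph containing an extended grid W (an ℓ×ℓ grid gadget together with ℓ₀ ≤ ℓ outsider nodes, where for i ≤ ℓ₀ the i-th outsider node is added to the hyperedge of the i-th row) such that the grid nodes of W belong to no hyperedge of H other than the row and column hyperedges of W, and each outsider node of W belongs to at most one hyperedge of H other than its row hyperedge. Let c be a 2-coloring of the nodes of H with colors red and blue in which red occurs at most ℓ²/2 times among the ℓ×ℓ grid nodes of W. Then the 2-coloring obtained from c by recoloring every node of W (grid nodes and outsider nodes) to blue has at most as many cut hyperedges in H as c does. -/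
open Finset

variable {α : Type*} [DecidableEq α]

/-- The hyperedge of the `i`-th row of an extended grid: the `i`-th grid row together
with the `i`-th outsider node (if `i < ℓ₀`). -/
def gridRowEdge {ℓ ℓ₀ : ℕ} (h : ℓ₀ ≤ ℓ) (g : Fin ℓ × Fin ℓ → α) (o : Fin ℓ₀ → α)
    (i : Fin ℓ) : Finset α :=
  (Finset.univ.image fun j : Fin ℓ => g (i, j)) ∪
    (Finset.univ.filter fun s : Fin ℓ₀ => Fin.castLE h s = i).image o

/-- The hyperedge of the `j`-th column of a grid gadget. -/
def gridColEdge {ℓ : ℕ} (g : Fin ℓ × Fin ℓ → α) (j : Fin ℓ) : Finset α :=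
  Finset.univ.image fun i : Fin ℓ => g (i, j)

/-- Auxiliary: an edge is cut by a coloring. -/
def isCut (d : α → Bool) (e : Finset α) : Prop := ∃ x ∈ e, ∃ y ∈ e, d x ≠ d y

instance (d : α → Bool) (e : Finset α) : Decidable (isCut d e) :=
  inferInstanceAs (Decidable (∃ x ∈ e, ∃ y ∈ e, d x ≠ d y))

/-- **Recoloring an extended grid.**  Let `H` be a hypergraph (edge set `E`) containing
an extended grid `W` (grid nodes `g`, outsider nodes `o`, with the row and column
hyperedges of `W` in `E`) such that grid nodes of `W` lie in no hyperedge other than the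
rows and columns of `W`, and each outsider node lies in at most one hyperedge other than
its row.  If the color red (`true`) occurs at most `ℓ²/2` times among the grid nodes of
`W` under the coloring `c`, then recoloring every node of `W` to blue (`false`) does not
increase the number of cut hyperedges of `H`. -/
theorem extended_grid_recolor {ℓ ℓ₀ : ℕ} (h : ℓ₀ ≤ ℓ)
    (E : Finset (Finset α)) (g : Fin ℓ × Fin ℓ → α) (o : Fin ℓ₀ → α)
    (hg : Function.Injective g) (ho : Function.Injective o)
    (hgo : ∀ p s, g p ≠ o s)
    (hrow : ∀ i : Fin ℓ, gridRowEdge h g o i ∈ E)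
    (hcol : ∀ j : Fin ℓ, gridColEdge g j ∈ E)
    (hgridonly : ∀ e ∈ E, ∀ p : Fin ℓ × Fin ℓ, g p ∈ e →
      (∃ i, e = gridRowEdge h g o i) ∨ (∃ j, e = gridColEdge g j))
    (hout : ∀ s : Fin ℓ₀,
      (E.filter fun e => o s ∈ e ∧ e ≠ gridRowEdge h g o (Fin.castLE h s)).card ≤ 1)
    (c : α → Bool)
    (hminor : 2 * (Finset.univ.filter fun p : Fin ℓ × Fin ℓ => c (g p) = true).card ≤ ℓ * ℓ) :
    (E.filter fun e => ∃ x ∈ e, ∃ y ∈ e,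
        (if x ∈ (Finset.univ.image g) ∪ (Finset.univ.image o) then false else c x) ≠
        (if y ∈ (Finset.univ.image g) ∪ (Finset.univ.image o) then false else c y)).card ≤
    (E.filter fun e => ∃ x ∈ e, ∃ y ∈ e, c x ≠ c y).card := by
  classical
  set W : Finset α := (Finset.univ.image g) ∪ (Finset.univ.image o) with hWdef
  set c' : α → Bool := fun x => (if x ∈ W then false else c x) with hc'def
  have hgoal1 : (E.filter fun e => ∃ x ∈ e, ∃ y ∈ e,
      (if x ∈ W then false else c x) ≠ (if y ∈ W then false else c y)) = E.filter (isCut c') :=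
    filter_congr (fun e _ => by simp only [isCut, hc'def])
  have hgoal2 : (E.filter fun e => ∃ x ∈ e, ∃ y ∈ e, c x ≠ c y) = E.filter (isCut c) :=
    filter_congr (fun e _ => by simp only [isCut])
  rw [hgoal1, hgoal2]
  -- basic facts about W and c'
  have hWg : ∀ p : Fin ℓ × Fin ℓ, g p ∈ W :=
    fun p => mem_union_left _ (mem_image_of_mem g (mem_univ p))
  have hWo : ∀ s, o s ∈ W :=
    fun s => mem_union_right _ (mem_image_of_mem o (mem_univ s))
  have hc'W : ∀ x ∈ W, c' x = false := fun x hx => if_pos hx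
  have hc'n : ∀ x, x ∉ W → c' x = c x := fun x hx => if_neg hx
  -- rows and columns are entirely inside W, hence uncut under c'
  have hrow_sub : ∀ i, ∀ z ∈ gridRowEdge h g o i, z ∈ W := by
    intro i z hz
    rw [gridRowEdge, mem_union] at hz
    rcases hz with hz | hz
    · obtain ⟨j, -, rfl⟩ := mem_image.mp hz; exact hWg (i, j)
    · obtain ⟨s, -, rfl⟩ := mem_image.mp hz; exact hWo s
  have hrow_nc : ∀ i, ¬ isCut c' (gridRowEdge h g o i) := by
    rintro i ⟨x, hx, y, hy, hxy⟩
    exact hxy (by rw [hc'W x (hrow_sub i x hx), hc'W y (hrow_sub i y hy)])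
  have hcol_nc : ∀ j, ¬ isCut c' (gridColEdge g j) := by
    rintro j ⟨x, hx, y, hy, hxy⟩
    rw [gridColEdge] at hx hy
    obtain ⟨i1, -, rfl⟩ := mem_image.mp hx
    obtain ⟨i2, -, rfl⟩ := mem_image.mp hy
    exact hxy (by rw [hc'W _ (hWg _), hc'W _ (hWg _)])
  -- key structural fact for newly-cut edges
  have key : ∀ e ∈ E, isCut c' e → ¬ isCut c e →
      ∃ s : Fin ℓ₀, o s ∈ e ∧ (∀ z ∈ e, c z = true) ∧
        ∀ i, e ≠ gridRowEdge h g o i := by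
    intro e he hcut hnc
    rw [isCut] at hnc; push_neg at hnc
    obtain ⟨x, hx, y, hy, hxy⟩ := hcut
    obtain ⟨u, hu, v, hv, hut, hvf⟩ : ∃ u ∈ e, ∃ v ∈ e, c' u = true ∧ c' v = false := by
      rcases Bool.eq_false_or_eq_true (c' x) with h1 | h1 <;>
        rcases Bool.eq_false_or_eq_true (c' y) with h2 | h2
      · exact absurd (h1.trans h2.symm) hxy
      · exact ⟨x, hx, y, hy, h1, h2⟩
      · exact ⟨y, hy, x, hx, h2, h1⟩
      · exact absurd (h1.trans h2.symm) hxy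
    have huW : u ∉ W := fun hmem => by rw [hc'W u hmem] at hut; exact Bool.false_ne_true hut
    have hcu : c u = true := by rw [← hc'n u huW]; exact hut
    have hall : ∀ z ∈ e, c z = true := fun z hz => (hnc z hz u hu).trans hcu
    have hvW : v ∈ W := by
      by_contra hvW'
      rw [hc'n v hvW', hall v hv] at hvf
      exact Bool.noConfusion hvf
    rw [hWdef, mem_union] at hvW
    rcases hvW with hvg | hvo
    · obtain ⟨p, -, rfl⟩ := mem_image.mp hvg
      rcases hgridonly e he p hv with ⟨i, rfl⟩ | ⟨j, rfl⟩
      · exact absurd ⟨x, hx, y, hy, hxy⟩ (hrow_nc i)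
      · exact absurd ⟨x, hx, y, hy, hxy⟩ (hcol_nc j)
    · obtain ⟨s, -, rfl⟩ := mem_image.mp hvo
      refine ⟨s, hv, hall, ?_⟩
      rintro i rfl
      exact hrow_nc i ⟨x, hx, y, hy, hxy⟩
  -- the two difference sets
  set N := E.filter (fun e => isCut c' e ∧ ¬ isCut c e) with hNdef
  set D := E.filter (fun e => isCut c e ∧ ¬ isCut c' e) with hDdef
  suffices hND : N.card ≤ D.card by
    have hsets : (E.filter (isCut c')) ∪ D = (E.filter (isCut c)) ∪ N := by
      ext e
      simp only [hNdef, hDdef, mem_union, mem_filter]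
      constructor
      · rintro (⟨he, hc1⟩ | ⟨he, hc1, hc2⟩)
        · by_cases h2 : isCut c e
          · exact Or.inl ⟨he, h2⟩
          · exact Or.inr ⟨he, hc1, h2⟩
        · exact Or.inl ⟨he, hc1⟩
      · rintro (⟨he, hc1⟩ | ⟨he, hc1, hc2⟩)
        · by_cases h2 : isCut c' e
          · exact Or.inl ⟨he, h2⟩
          · exact Or.inr ⟨he, hc1, h2⟩
        · exact Or.inl ⟨he, hc1⟩
    have hd1 : Disjoint (E.filter (isCut c')) D := by
      rw [disjoint_left]
      intro e he1 he2
      exact (mem_filter.mp he2).2.2 (mem_filter.mp he1).2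
    have hd2 : Disjoint (E.filter (isCut c)) N := by
      rw [disjoint_left]
      intro e he1 he2
      exact (mem_filter.mp he2).2.2 (mem_filter.mp he1).2
    have e1 := Finset.card_union_of_disjoint hd1
    have e2 := Finset.card_union_of_disjoint hd2
    rw [hsets, e2] at e1
    omega
  -- trivial case: no outsiders
  rcases Nat.eq_zero_or_pos ℓ₀ with hℓ₀ | hℓ₀
  · have hNempty : N = ∅ := by
      rw [hNdef, Finset.filter_eq_empty_iff]
      rintro e he ⟨h1, h2⟩
      obtain ⟨s, -⟩ := key e he h1 h2
      exact absurd s.isLt (by omega)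
    simp [hNempty]
  have hℓpos : 0 < ℓ := lt_of_lt_of_le hℓ₀ h
  -- outsiders hit by newly-cut edges
  set T : Finset (Fin ℓ₀) := univ.filter (fun s => ∃ e ∈ N, o s ∈ e) with hTdef
  -- each e ∈ N contains an outsider
  have hNout : ∀ e ∈ N, ∃ s : Fin ℓ₀, o s ∈ e := by
    intro e he
    obtain ⟨hE, h1, h2⟩ := mem_filter.mp he
    obtain ⟨s, hs, -, -⟩ := key e hE h1 h2
    exact ⟨s, hs⟩
  have : Nonempty (Fin ℓ₀) := ⟨⟨0, hℓ₀⟩⟩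
  choose! f hf using hNout
  have hNT : N.card ≤ T.card := by
    apply Finset.card_le_card_of_injOn f
    · intro e he
      exact mem_filter.mpr ⟨mem_univ _, e, he, hf e he⟩
    · intro e1 he1 e2 he2 heq
      simp only [mem_coe] at he1 he2
      have hm1 : o (f e1) ∈ e1 := hf e1 he1
      have hm2 : o (f e1) ∈ e2 := heq ▸ hf e2 he2
      obtain ⟨hE1, hc1, hn1⟩ := mem_filter.mp he1
      obtain ⟨hE2, hc2, hn2⟩ := mem_filter.mp he2
      obtain ⟨-, -, -, hne1⟩ := key e1 hE1 hc1 hn1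
      obtain ⟨-, -, -, hne2⟩ := key e2 hE2 hc2 hn2
      exact Finset.card_le_one.mp (hout (f e1)) e1
        (mem_filter.mpr ⟨hE1, hm1, hne1 _⟩) e2
        (mem_filter.mpr ⟨hE2, hm2, hne2 _⟩)
  -- every s ∈ T has a red outsider node
  have hTred : ∀ s ∈ T, c (o s) = true := by
    intro s hs
    obtain ⟨-, e, he, hmem⟩ := mem_filter.mp hs
    obtain ⟨hE, h1, h2⟩ := mem_filter.mp he
    obtain ⟨-, -, hall, -⟩ := key e hE h1 h2
    exact hall _ hmem
  -- cut rows / cut columns under c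
  set CR : Finset (Fin ℓ) := univ.filter (fun i => isCut c (gridRowEdge h g o i)) with hCRdef
  set CC : Finset (Fin ℓ) := univ.filter (fun j => isCut c (gridColEdge g j)) with hCCdef
  set TA := T.filter (fun s => isCut c (gridRowEdge h g o (Fin.castLE h s))) with hTAdef
  set TB := T.filter (fun s => ¬ isCut c (gridRowEdge h g o (Fin.castLE h s))) with hTBdef
  have hTsplit : TA.card + TB.card = T.card :=
    Finset.card_filter_add_card_filter_not _
  have hTACR : TA.card ≤ CR.card := by
    apply Finset.card_le_card_of_injOn (Fin.castLE h)
    · intro s hs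
      exact mem_filter.mpr ⟨mem_univ _, (mem_filter.mp hs).2⟩
    · exact (Fin.castLE_injective h).injOn
  -- all-red rows
  set AR : Finset (Fin ℓ) := univ.filter (fun i => ∀ j, c (g (i, j)) = true) with hARdef
  have hTBmaps : ∀ s ∈ TB, Fin.castLE h s ∈ AR := by
    intro s hs
    obtain ⟨hsT, hnc⟩ := mem_filter.mp hs
    rw [isCut] at hnc; push_neg at hnc
    refine mem_filter.mpr ⟨mem_univ _, fun j => ?_⟩
    have hgmem : g (Fin.castLE h s, j) ∈ gridRowEdge h g o (Fin.castLE h s) :=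
      mem_union_left _ (mem_image_of_mem _ (mem_univ j))
    have homem : o s ∈ gridRowEdge h g o (Fin.castLE h s) :=
      mem_union_right _ (mem_image_of_mem _ (mem_filter.mpr ⟨mem_univ _, rfl⟩))
    exact (hnc _ hgmem _ homem).trans (hTred s hsT)
  have hTBAR : TB.card ≤ AR.card := by
    apply Finset.card_le_card_of_injOn (Fin.castLE h) hTBmaps
    exact (Fin.castLE_injective h).injOn
  -- counting: TB.card ≤ CC.card
  have hTBCC : TB.card ≤ CC.card := by
    rcases TB.eq_empty_or_nonempty with hTB | ⟨s0, hs0⟩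
    · simp [hTB]
    have hi0 : ∀ j, c (g (Fin.castLE h s0, j)) = true :=
      (mem_filter.mp (hTBmaps s0 hs0)).2
    set BC : Finset (Fin ℓ) := univ.filter (fun j => ∃ i, c (g (i, j)) = false) with hBCdef
    have hBCCC : BC ⊆ CC := by
      intro j hj
      obtain ⟨i, hij⟩ := (mem_filter.mp hj).2
      refine mem_filter.mpr ⟨mem_univ _, g (i, j), ?_, g (Fin.castLE h s0, j), ?_, ?_⟩
      · rw [gridColEdge]; exact mem_image_of_mem _ (mem_univ i)
      · rw [gridColEdge]; exact mem_image_of_mem _ (mem_univ _)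
      · rw [hij, hi0 j]; exact Bool.false_ne_true
    set r := (univ.filter fun p : Fin ℓ × Fin ℓ => c (g p) = true).card with hrdef
    have h1 : AR.card * ℓ ≤ r := by
      have hsub : AR ×ˢ (univ : Finset (Fin ℓ)) ⊆
          univ.filter fun p : Fin ℓ × Fin ℓ => c (g p) = true := by
        intro p hp
        obtain ⟨hp1, -⟩ := mem_product.mp hp
        exact mem_filter.mpr ⟨mem_univ _, (mem_filter.mp hp1).2 p.2⟩
      calc AR.card * ℓ = (AR ×ˢ (univ : Finset (Fin ℓ))).card := by
            rw [card_product, card_univ, Fintype.card_fin]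
        _ ≤ r := card_le_card hsub
    have h2 : r + (univ.filter fun p : Fin ℓ × Fin ℓ => ¬ (c (g p) = true)).card = ℓ * ℓ := by
      rw [hrdef, Finset.card_filter_add_card_filter_not, card_univ,
        Fintype.card_prod, Fintype.card_fin]
    have h3 : (univ.filter fun p : Fin ℓ × Fin ℓ => ¬ (c (g p) = true)).card ≤ ℓ * BC.card := by
      have hsub : (univ.filter fun p : Fin ℓ × Fin ℓ => ¬ (c (g p) = true)) ⊆
          (univ : Finset (Fin ℓ)) ×ˢ BC := by
        intro p hp
        have hblue : c (g p) = false := by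
          have := (mem_filter.mp hp).2
          simpa using this
        exact mem_product.mpr ⟨mem_univ _,
          mem_filter.mpr ⟨mem_univ _, p.1, hblue⟩⟩
      calc (univ.filter fun p : Fin ℓ × Fin ℓ => ¬ (c (g p) = true)).card
          ≤ ((univ : Finset (Fin ℓ)) ×ˢ BC).card := card_le_card hsub
        _ = ℓ * BC.card := by rw [card_product, card_univ, Fintype.card_fin]
    have h4 : BC.card ≤ CC.card := card_le_card hBCCC
    have h5 : ℓ * BC.card ≤ ℓ * CC.card := Nat.mul_le_mul_left _ h4
    have h6 : AR.card * ℓ ≤ CC.card * ℓ := by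
      have : r ≤ (univ.filter fun p : Fin ℓ × Fin ℓ => ¬ (c (g p) = true)).card := by
        rw [hrdef] at hminor ⊢
        omega
      calc AR.card * ℓ ≤ r := h1
        _ ≤ _ := this
        _ ≤ ℓ * CC.card := le_trans h3 h5
        _ = CC.card * ℓ := Nat.mul_comm _ _
    exact le_trans hTBAR (Nat.le_of_mul_le_mul_right h6 hℓpos)
  -- injectivity of row and column edges, and disjointness
  have hrow_inj : Function.Injective (gridRowEdge h g o) := by
    intro i1 i2 hi
    have hmem : g (i1, ⟨0, hℓpos⟩) ∈ gridRowEdge h g o i2 := by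
      rw [← hi]; exact mem_union_left _ (mem_image_of_mem _ (mem_univ _))
    rw [gridRowEdge, mem_union] at hmem
    rcases hmem with hmem | hmem
    · obtain ⟨j, -, hj⟩ := mem_image.mp hmem
      exact ((Prod.ext_iff.mp (hg hj)).1).symm
    · obtain ⟨s, -, hs⟩ := mem_image.mp hmem
      exact absurd hs.symm (hgo _ _)
  have hcol_inj : Function.Injective (gridColEdge g) := by
    intro j1 j2 hj
    have hmem : g (⟨0, hℓpos⟩, j1) ∈ gridColEdge g j2 := by
      rw [← hj, gridColEdge]; exact mem_image_of_mem _ (mem_univ _)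
    rw [gridColEdge] at hmem
    obtain ⟨i, -, hi⟩ := mem_image.mp hmem
    exact ((Prod.ext_iff.mp (hg hi)).2).symm
  have hrc : ∀ i j, gridRowEdge h g o i ≠ gridColEdge g j := by
    intro i j heq
    have hall : ∀ j' : Fin ℓ, j' = j := by
      intro j'
      have hmem : g (i, j') ∈ gridColEdge g j := by
        rw [← heq]; exact mem_union_left _ (mem_image_of_mem _ (mem_univ _))
      rw [gridColEdge] at hmem
      obtain ⟨i', -, hi'⟩ := mem_image.mp hmem
      exact ((Prod.ext_iff.mp (hg hi')).2).symm
    have hs0mem : o ⟨0, hℓ₀⟩ ∈ gridRowEdge h g o i := by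
      apply mem_union_right
      apply mem_image_of_mem
      exact mem_filter.mpr ⟨mem_univ _, (hall _).trans (hall i).symm⟩
    rw [heq, gridColEdge] at hs0mem
    obtain ⟨i', -, hi'⟩ := mem_image.mp hs0mem
    exact hgo _ _ hi'
  -- the cut rows and columns inject into D
  have hCRCCD : CR.card + CC.card ≤ D.card := by
    have hDsub : (CR.image (gridRowEdge h g o)) ∪ (CC.image (gridColEdge g)) ⊆ D := by
      intro e he
      rcases mem_union.mp he with he | he
      · obtain ⟨i, hi, rfl⟩ := mem_image.mp he
        exact mem_filter.mpr ⟨hrow i, (mem_filter.mp hi).2, hrow_nc i⟩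
      · obtain ⟨j, hj, rfl⟩ := mem_image.mp he
        exact mem_filter.mpr ⟨hcol j, (mem_filter.mp hj).2, hcol_nc j⟩
    have hdisj : Disjoint (CR.image (gridRowEdge h g o)) (CC.image (gridColEdge g)) := by
      rw [disjoint_left]
      intro e he1 he2
      obtain ⟨i, -, rfl⟩ := mem_image.mp he1
      obtain ⟨j, -, hj⟩ := mem_image.mp he2
      exact hrc i j hj.symm
    calc CR.card + CC.card
        = (CR.image (gridRowEdge h g o)).card + (CC.image (gridColEdge g)).card := by
          rw [card_image_of_injective _ hrow_inj, card_image_of_injective _ hcol_inj]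
      _ = ((CR.image (gridRowEdge h g o)) ∪ (CC.image (gridColEdge g))).card :=
          (Finset.card_union_of_disjoint hdisj).symm
      _ ≤ D.card := card_le_card hDsub
  calc N.card ≤ T.card := hNT
    _ = TA.card + TB.card := hTsplit.symm
    _ ≤ CR.card + CC.card := Nat.add_le_add hTACR hTBCC
    _ ≤ D.card := hCRCCD
end

section
/- Let G be a hypergraph in which every hyperedge has at least 2 nodes. Then G is a hyperDAG if and only if for every nonempty subset V₀ of its node set, the subhypergraph induced by V₀ (whose hyperedges are exactly the hyperedges of G entirely contained in V₀) has a node of degree at most 1, i.e., a node of V₀ contained in at most one hyperedge of G that is a subset of V₀. -/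
open Finset

/-- A hypergraph (given by its finite edge set `E` over the node type `α`) is a
*hyperDAG* if there is an acyclic directed graph (a relation `r` with no cycles) on the
same node set whose hyperDAG representation is exactly `E`: the hyperedges are the sets
`{u} ∪ S_u` for every node `u` with nonempty successor set `S_u = {v | r u v}`. -/
def IsHyperDAG {α : Type*} (E : Finset (Finset α)) : Prop :=
  ∃ r : α → α → Prop, (∀ x : α, ¬ Relation.TransGen r x x) ∧
    ∀ s : Finset α, s ∈ E ↔ ∃ u : α, (∃ v, r u v) ∧ (s : Set α) = insert u {v | r u v}

lemma exists_elim_order {α : Type*} [DecidableEq α] (E : Finset (Finset α))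
    (h : ∀ V₀ : Finset α, V₀.Nonempty →
      ∃ v ∈ V₀, (E.filter fun e => v ∈ e ∧ e ⊆ V₀).card ≤ 1) :
    ∀ V₀ : Finset α, ∃ f : α → ℕ, Set.InjOn f ↑V₀ ∧
      ∀ v ∈ V₀, (E.filter fun e => v ∈ e ∧ e ⊆ V₀.filter fun w => f v ≤ f w).card ≤ 1 := by
  intro V₀
  induction V₀ using Finset.strongInduction with
  | _ s ih =>
    rcases s.eq_empty_or_nonempty with rfl | hs
    · exact ⟨fun _ => 0, by simp, by simp⟩
    · obtain ⟨v, hv, hdeg⟩ := h s hs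
      obtain ⟨f, hfinj, hf⟩ := ih (s.erase v) (Finset.erase_ssubset hv)
      set g : α → ℕ := fun w => if w = v then 0 else f w + 1 with hg
      refine ⟨g, ?_, ?_⟩
      · intro a ha b hb hab
        by_cases hav : a = v <;> by_cases hbv : b = v
        · rw [hav, hbv]
        · simp [hg, hav, hbv] at hab
        · simp [hg, hav, hbv] at hab
        · simp only [hg, if_neg hav, if_neg hbv] at hab
          exact hfinj (by simp [Finset.mem_erase, hav]; exact ha)
            (by simp [Finset.mem_erase, hbv]; exact hb) (by omega)
      · intro w hw
        by_cases hwv : w = v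
        · have hfil : (s.filter fun x => g w ≤ g x) = s :=
            Finset.filter_true_of_mem (fun x hx => by simp [hg, hwv])
          rw [hfil, hwv]
          exact hdeg
        · have hgw : g w = f w + 1 := by simp [hg, hwv]
          have hsub : (s.filter fun x => g w ≤ g x) ⊆
              (s.erase v).filter fun x => f w ≤ f x := by
            intro x hx
            simp only [Finset.mem_filter] at hx
            have hxv : x ≠ v := by
              rintro rfl
              simp [hg, hgw] at hx
              exact hwv hx.2
            simp only [Finset.mem_filter, Finset.mem_erase]
            refine ⟨⟨hxv, hx.1⟩, ?_⟩
            have : g x = f x + 1 := by simp [hg, hxv]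
            omega
          refine le_trans (Finset.card_le_card ?_) (hf w (Finset.mem_erase.mpr ⟨hwv, hw⟩))
          intro e he
          simp only [Finset.mem_filter] at he ⊢
          exact ⟨he.1, he.2.1, he.2.2.trans hsub⟩


/-- **Characterization of hyperDAGs.**  A hypergraph in which every hyperedge has at
least `2` nodes is a hyperDAG if and only if every nonempty induced subhypergraph has a
node of degree at most `1`, i.e. every nonempty `V₀` contains a node lying in at most
one hyperedge that is a subset of `V₀`. -/
theorem isHyperDAG_iff_induced_low_degree {α : Type*} [Fintype α] [DecidableEq α]
    (E : Finset (Finset α)) (hE : ∀ e ∈ E, 2 ≤ e.card) :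
    IsHyperDAG E ↔ ∀ V₀ : Finset α, V₀.Nonempty →
      ∃ v ∈ V₀, (E.filter fun e => v ∈ e ∧ e ⊆ V₀).card ≤ 1 := by
  constructor
  · rintro ⟨r, hacyc, hrep⟩ V₀ hV₀
    set q : α → α → Prop := fun u v => r u v ∧ u ∈ V₀ ∧ ∀ w, r u w → w ∈ V₀ with hqdef
    have hwf : WellFounded q := by
      have hwf' : WellFounded (Relation.TransGen r) :=
        @Finite.wellFounded_of_trans_of_irrefl α _ _ inferInstance ⟨hacyc⟩
      exact Subrelation.wf (fun {u v} hq => Relation.TransGen.single hq.1) hwf'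
    obtain ⟨m, hm, hmin⟩ := hwf.has_min ↑V₀ (Finset.coe_nonempty.mpr hV₀)
    refine ⟨m, hm, Finset.card_le_one.mpr ?_⟩
    have key : ∀ e ∈ E.filter fun e => m ∈ e ∧ e ⊆ V₀,
        (e : Set α) = insert m {v | r m v} := by
      intro e he
      simp only [Finset.mem_filter] at he
      obtain ⟨heE, hme, heV⟩ := he
      obtain ⟨u, ⟨v, hv⟩, hcoe⟩ := (hrep e).mp heE
      have hmu : m = u := by
        have : (m : α) ∈ (e : Set α) := hme
        rw [hcoe] at this
        rcases this with h1 | h1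
        · exact h1
        · exfalso
          have huV : u ∈ V₀ := by
            have : (u : α) ∈ (e : Set α) := by rw [hcoe]; exact Set.mem_insert _ _
            exact heV this
          refine hmin u huV ⟨h1, huV, fun w hw => ?_⟩
          have hwmem : (w : α) ∈ (e : Set α) := by
            rw [hcoe]; exact Set.mem_insert_of_mem _ hw
          exact heV hwmem
      rw [hcoe, hmu]
    intro a ha b hb
    exact Finset.coe_injective ((key a ha).trans (key b hb).symm)
  · intro h
    obtain ⟨f, hfinj', hf⟩ := exists_elim_order E h Finset.univ
    have hfinj : Function.Injective f := fun a b hab =>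
      hfinj' (by simp) (by simp) hab
    set r : α → α → Prop := fun u v =>
      ∃ e ∈ E, u ∈ e ∧ (∀ x ∈ e, f u ≤ f x) ∧ v ∈ e ∧ f u < f v with hrdef
    have huniq : ∀ u : α, ∀ e ∈ E, ∀ e' ∈ E, u ∈ e → (∀ x ∈ e, f u ≤ f x) →
        u ∈ e' → (∀ x ∈ e', f u ≤ f x) → e = e' := by
      intro u e he e' he' hue hmine hue' hmine'
      have hcard := hf u (Finset.mem_univ u)
      refine Finset.card_le_one.mp hcard e ?_ e' ?_ <;>
        simp only [Finset.mem_filter] <;>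
        refine ⟨‹_›, ‹_›, fun x hx => Finset.mem_filter.mpr ⟨Finset.mem_univ x, ?_⟩⟩
      · exact hmine x hx
      · exact hmine' x hx
    have hlt : ∀ {a b}, r a b → f a < f b := by
      rintro a b ⟨e, _, _, _, _, h⟩
      exact h
    refine ⟨r, ?_, ?_⟩
    · intro x hx
      have : ∀ {a b}, Relation.TransGen r a b → f a < f b := by
        intro a b hab
        induction hab with
        | single h => exact hlt h
        | tail _ h ih => exact ih.trans (hlt h)
      exact lt_irrefl _ (this hx)
    · intro s
      constructor
      · intro hs
        have hsne : s.Nonempty := Finset.card_pos.mp (by have := hE s hs; omega)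
        obtain ⟨u, hu, humin⟩ := s.exists_min_image f hsne
        have herase : (s.erase u).Nonempty := by
          rw [← Finset.card_pos, Finset.card_erase_of_mem hu]
          have := hE s hs; omega
        obtain ⟨v, hv⟩ := herase
        rw [Finset.mem_erase] at hv
        have hfuv : ∀ x ∈ s, x ≠ u → f u < f x := fun x hx hxu =>
          lt_of_le_of_ne (humin x hx) (fun hfe => hxu (hfinj hfe.symm))
        refine ⟨u, ⟨v, s, hs, hu, humin, hv.2, hfuv v hv.2 hv.1⟩, ?_⟩
        ext x
        simp only [Finset.mem_coe, Set.mem_insert_iff, Set.mem_setOf_eq]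
        constructor
        · intro hx
          by_cases hxu : x = u
          · exact Or.inl hxu
          · exact Or.inr ⟨s, hs, hu, humin, hx, hfuv x hx hxu⟩
        · rintro (rfl | ⟨e, heE, hue, hmine, hxe, _⟩)
          · exact hu
          · rw [huniq u s hs e heE hu humin hue hmine]
            exact hxe
      · rintro ⟨u, ⟨v, hv⟩, hcoe⟩
        obtain ⟨e, heE, hue, hmine, hve, hfv⟩ := hv
        have hset : ({w | r u w} : Set α) = ↑e \ {u} := by
          ext x
          simp only [Set.mem_setOf_eq, Set.mem_diff, Finset.mem_coe, Set.mem_singleton_iff]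
          constructor
          · rintro ⟨e', he'E, hue', hmine', hxe', hfx⟩
            have he'e : e' = e := huniq u e' he'E e heE hue' hmine' hue hmine
            subst he'e
            exact ⟨hxe', fun hxu => by subst hxu; exact lt_irrefl _ hfx⟩
          · rintro ⟨hxe, hxu⟩
            exact ⟨e, heE, hue, hmine, hxe,
              lt_of_le_of_ne (hmine x hxe) (fun hfe => hxu (hfinj hfe.symm))⟩
        have : (s : Set α) = ↑e := by
          rw [hcoe, hset, Set.insert_diff_singleton, Set.insert_eq_self.mpr (by exact hue)]
        rw [Finset.coe_injective this]
        exact heE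
end

section
/- Let G be a hyperDAG on n nodes and let d_1 ≤ d_2 ≤ … ≤ d_n be the degrees of its nodes sorted in nondecreasing order, where the degree of a node is the number of hyperedges containing it. Then d_i ≤ i for every i ∈ [n]; equivalently, for every i ∈ [n] there are at least i nodes of degree at most i. -/
/-!
Order the nodes along the DAG and let `T` consist of the first `i` of them, so that `T` is
closed under predecessors. A hyperedge `{u} ∪ S_u` through a node `v ∈ T` has `u = v` or
`u` a predecessor of `v`, so its source `u` lies in `T`; as a hyperedge is determined by its
source, every node of `T` has degree at most `|T| = i`.
-/

open Finset

section

variable {α : Type*}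

def IsPredClosed (r : α → α → Prop) (T : Finset α) : Prop :=
  ∀ ⦃u v⦄, r u v → v ∈ T → u ∈ T

theorem wellFounded_of_forall_not_transGen_self [Finite α] {r : α → α → Prop}
    (hr : ∀ x, ¬ Relation.TransGen r x x) : WellFounded r :=
  haveI : IsTrans α (Relation.TransGen r) := ⟨fun _ _ _ => Relation.TransGen.trans⟩
  haveI : Std.Irrefl (Relation.TransGen r) := ⟨hr⟩
  Subrelation.wf Relation.TransGen.single (Finite.wellFounded_of_trans_of_irrefl _)

theorem WellFounded.exists_isPredClosed_card_eq [Fintype α] {r : α → α → Prop}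
    (hr : WellFounded r) {i : ℕ} (hi : i ≤ Fintype.card α) :
    ∃ T : Finset α, T.card = i ∧ IsPredClosed r T := by
  classical
  induction i with
  | zero => exact ⟨∅, rfl, fun _ _ _ hv => absurd hv (notMem_empty _)⟩
  | succ i ih =>
    obtain ⟨T, hcard, hT⟩ := ih (Nat.le_of_succ_le hi)
    have hne : ((Tᶜ : Finset α) : Set α).Nonempty := by
      rw [coe_nonempty, ← card_pos, card_compl, hcard]
      omega
    -- adding an `r`-minimal node outside `T` keeps `T` closed under predecessors
    obtain ⟨v, hv, hmin⟩ := hr.has_min _ hne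
    have hvT : v ∉ T := by simpa using hv
    refine ⟨insert v T, by rw [card_insert_of_notMem hvT, hcard], fun u w huw hw => ?_⟩
    rcases mem_insert.mp hw with rfl | hwT
    · by_contra hu
      exact hmin u (mem_coe.mpr (mem_compl.mpr fun h => hu (mem_insert_of_mem h))) huw
    · exact mem_insert_of_mem (hT huw hwT)

theorem card_filter_mem_le_card_of_isPredClosed [Fintype α] [DecidableEq α]
    {r : α → α → Prop} {E : Finset (Finset α)}
    (hE : ∀ e ∈ E, ∃ u, (e : Set α) = insert u {w | r u w})
    {T : Finset α} (hT : IsPredClosed r T) {v : α} (hv : v ∈ T) :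
    (E.filter fun e => v ∈ e).card ≤ T.card := by
  classical
  calc (E.filter fun e => v ∈ e).card
      ≤ (T.image fun u => insert u (univ.filter (r u))).card := by
        refine card_le_card fun e he => ?_
        obtain ⟨heE, hve⟩ := mem_filter.mp he
        obtain ⟨u, hu⟩ := hE e heE
        have hve' : v ∈ insert u {w | r u w} := hu ▸ hve
        refine mem_image.mpr ⟨u, ?_, coe_injective (by simp [hu])⟩
        rcases hve' with rfl | huv
        · exact hv
        · exact hT huv hv
    _ ≤ T.card := card_image_le

end

/-- **Degree sequence of a hyperDAG.**  In a hyperDAG on `n` nodes, the `i`-th smallest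
degree is at most `i`; equivalently, for every `i ∈ [n]` there are at least `i` nodes of
degree at most `i` (the degree of `v` being the number of hyperedges containing `v`). -/
theorem hyperDAG_degree_sequence {α : Type*} [Fintype α] [DecidableEq α]
    (E : Finset (Finset α)) (h : IsHyperDAG E) :
    ∀ i : ℕ, 1 ≤ i → i ≤ Fintype.card α →
      i ≤ (Finset.univ.filter fun v : α => (E.filter fun e => v ∈ e).card ≤ i).card := by
  intro i _ hi
  obtain ⟨r, hacyc, hE⟩ := h
  obtain ⟨T, hcard, hT⟩ :=
    (wellFounded_of_forall_not_transGen_self hacyc).exists_isPredClosed_card_eq hi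
  have hsource : ∀ e ∈ E, ∃ u, (e : Set α) = insert u {w | r u w} := fun e he =>
    ((hE e).mp he).imp fun _ hu => hu.2
  calc i = T.card := hcard.symm
    _ ≤ _ := card_le_card fun v hv => mem_filter.mpr
      ⟨mem_univ v, hcard ▸ card_filter_mem_le_card_of_isPredClosed hsource hT hv⟩
end

section
/- Every hyperDAG on n ≥ 1 nodes has at most n − 1 hyperedges. -/
open Finset

/-- Every hyperDAG on `n ≥ 1` nodes has at most `n - 1` hyperedges. -/
theorem hyperDAG_card_edges_le {α : Type*} [Fintype α]
    (E : Finset (Finset α)) (hn : 1 ≤ Fintype.card α) (h : IsHyperDAG E) :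
    E.card ≤ Fintype.card α - 1 := by
  classical
  obtain ⟨r, hacyc, hE⟩ := h
  haveI : Nonempty α := Fintype.card_pos_iff.mp hn
  haveI : IsTrans α (flip (Relation.TransGen r)) := ⟨fun a b c h1 h2 => h2.trans h1⟩
  haveI : IsIrrefl α (flip (Relation.TransGen r)) := ⟨fun a => hacyc a⟩
  have hwf := Finite.wellFounded_of_trans_of_irrefl (flip (Relation.TransGen r))
  obtain ⟨m, -, hm⟩ := hwf.has_min Set.univ ⟨Classical.arbitrary α, trivial⟩
  have hmno : ∀ v, ¬ r m v := fun v hv => hm v trivial (Relation.TransGen.single hv)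
  set f : α → Finset α := fun u => insert u (univ.filter (fun v => r u v)) with hf
  have hsub : E ⊆ (univ.erase m).image f := by
    intro s hs
    obtain ⟨u, ⟨v, huv⟩, hcoe⟩ := (hE s).mp hs
    refine mem_image.mpr ⟨u, mem_erase.mpr ⟨fun h => hmno v (h ▸ huv), mem_univ u⟩, ?_⟩
    apply Finset.coe_injective
    rw [hcoe]
    simp [hf, Set.ext_iff]
  calc E.card ≤ ((univ.erase m).image f).card := card_le_card hsub
    _ ≤ (univ.erase m).card := card_image_le
    _ = Fintype.card α - 1 := by rw [card_erase_of_mem (mem_univ m), card_univ]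
end

section
/- Fix an integer k ≥ 2, a real ε > 0, and a hypergraph G on n nodes such that ε·n is a nonnegative integer and k divides (1+ε)·n. Let G' be the hypergraph obtained from G by adding ε·n isolated nodes (nodes belonging to no hyperedge), so that G' has n' = (1+ε)·n nodes. Then for every integer L, G' admits a k-way partitioning with all parts of size exactly n'/k and connectivity cost at most L if and only if G admits an ε-balanced k-way partitioning of connectivity cost at most L; the same equivalence holds with connectivity cost replaced by cut-net cost. -/
/-!
The isolated nodes lie in no hyperedge, so the cost of a partition of `G'` is the cost of its
restriction to `G`. Writing `q = n'/k = (1+ε)n/k`, a partition of `G` with all parts of size at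
most `q` extends to one of `G'` with all parts of size exactly `q`: the deficits `q - |P_i|` sum
to `kq - n = m`, the number of isolated nodes to distribute.
-/

open Finset

section Fibers

variable {α β γ : Type*} [Fintype α] [Fintype β] [Fintype γ] [DecidableEq γ]

omit [Fintype γ] in
theorem card_fiber_sum_elim (f : α → γ) (g : β → γ) (i : γ) :
    #{x | Sum.elim f g x = i} = #{a | f a = i} + #{b | g b = i} := by
  simp only [card_filter, Fintype.sum_sum_type]
  rfl

theorem exists_card_fiber_eq (d : γ → ℕ) (hd : ∑ i, d i = Fintype.card β) :
    ∃ f : β → γ, ∀ i, #{b | f b = i} = d i := by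
  let e : β ≃ Σ i, Fin (d i) := Fintype.equivOfCardEq (by simp [hd])
  refine ⟨fun b => (e b).1, fun i => ?_⟩
  rw [card_filter, e.sum_comp (fun s => if s.1 = i then 1 else 0), Fintype.sum_sigma]
  simp [apply_ite card]

theorem exists_extension_card_fiber_eq (P : α → γ) {q : ℕ} (hP : ∀ i, #{a | P a = i} ≤ q)
    (hcard : Fintype.card α + Fintype.card β = Fintype.card γ * q) :
    ∃ P' : α ⊕ β → γ, P' ∘ Sum.inl = P ∧ ∀ i, #{x | P' x = i} = q := by
  have hfibers : ∑ i, #{a | P a = i} = Fintype.card α :=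
    (card_eq_sum_card_fiberwise fun a _ => mem_univ (P a)).symm
  have hd : ∑ i, (q - #{a | P a = i}) = Fintype.card β := by
    rw [sum_tsub_distrib _ fun i _ => hP i, hfibers, sum_const, card_univ, smul_eq_mul]
    omega
  obtain ⟨f, hf⟩ := exists_card_fiber_eq _ hd
  refine ⟨Sum.elim P f, rfl, fun i => ?_⟩
  rw [card_fiber_sum_elim, hf i]
  have := hP i
  omega

theorem exists_card_fiber_eq_sum_iff_exists_card_fiber_le {q : ℕ}
    (hcard : Fintype.card α + Fintype.card β = Fintype.card γ * q) (C : (α → γ) → Prop) :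
    (∃ P' : α ⊕ β → γ, (∀ i, #{x | P' x = i} = q) ∧ C (P' ∘ Sum.inl)) ↔
      ∃ P : α → γ, (∀ i, #{a | P a = i} ≤ q) ∧ C P := by
  constructor
  · rintro ⟨P', hP', hC⟩
    refine ⟨P' ∘ Sum.inl, fun i => ?_, hC⟩
    rw [← hP' i]
    exact card_le_card_of_injOn Sum.inl (fun a ha => by simpa using ha) Sum.inl_injective.injOn
  · rintro ⟨P, hP, hC⟩
    obtain ⟨P', rfl, hP'⟩ := exists_extension_card_fiber_eq P hP hcard
    exact ⟨P', hP', hC⟩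

end Fibers

theorem isolated_nodes_reduction_general {α : Type*} [Fintype α] [DecidableEq α]
    (k : ℕ) (ε : ℝ)
    (E : Finset (Finset α)) (m : ℕ) (hm : (m : ℝ) = ε * Fintype.card α)
    (hdvd : k ∣ Fintype.card α + m) (L : ℤ) :
    ((∃ P' : α ⊕ Fin m → Fin k,
        (∀ i : Fin k,
          (Finset.univ.filter fun a => P' a = i).card = (Fintype.card α + m) / k) ∧
        ((∑ e ∈ E.image (fun e => e.image (Sum.inl : α → α ⊕ Fin m)),
            ((e.image P').card - 1) : ℕ) : ℤ) ≤ L) ↔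
      (∃ P : α → Fin k,
        (∀ i : Fin k, ((Finset.univ.filter fun a => P a = i).card : ℝ) ≤
          (1 + ε) * Fintype.card α / k) ∧
        ((∑ e ∈ E, ((e.image P).card - 1) : ℕ) : ℤ) ≤ L)) ∧
    ((∃ P' : α ⊕ Fin m → Fin k,
        (∀ i : Fin k,
          (Finset.univ.filter fun a => P' a = i).card = (Fintype.card α + m) / k) ∧
        ((((E.image (fun e => e.image (Sum.inl : α → α ⊕ Fin m))).filter
            fun e => 1 < (e.image P').card).card : ℕ) : ℤ) ≤ L) ↔
      (∃ P : α → Fin k,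
        (∀ i : Fin k, ((Finset.univ.filter fun a => P a = i).card : ℝ) ≤
          (1 + ε) * Fintype.card α / k) ∧
        (((E.filter fun e => 1 < (e.image P).card).card : ℕ) : ℤ) ≤ L)) := by
  have hcard : Fintype.card α + Fintype.card (Fin m) =
      Fintype.card (Fin k) * ((Fintype.card α + m) / k) := by
    simp [Nat.mul_div_cancel' hdvd]
  have hq : (1 + ε) * Fintype.card α / k = (((Fintype.card α + m) / k : ℕ) : ℝ) := by
    rw [Nat.cast_div_charZero hdvd, Nat.cast_add, hm]
    ring
  have hinj : Set.InjOn (image (Sum.inl : α → α ⊕ Fin m)) E :=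
    (image_injective Sum.inl_injective).injOn
  simp only [sum_image hinj, filter_image, card_image_of_injOn (hinj.mono (filter_subset _ _)),
    image_image, hq, Nat.cast_le]
  exact ⟨exists_card_fiber_eq_sum_iff_exists_card_fiber_le hcard
      fun P => ((∑ e ∈ E, (#(e.image P) - 1) : ℕ) : ℤ) ≤ L,
    exists_card_fiber_eq_sum_iff_exists_card_fiber_le hcard
      fun P => ((#{e ∈ E | 1 < #(e.image P)} : ℕ) : ℤ) ≤ L⟩

/-- **Reduction from `ε`-balanced partitioning to `k`-section via isolated nodes.**
Let `G` be a hypergraph on `n` nodes (node type `α`), `ε > 0` with `ε·n = m ∈ ℕ`, and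
`k ∣ (1+ε)·n = n + m`.  Let `G'` be obtained from `G` by adding `m` isolated nodes, so
`G'` has `n' = n + m` nodes.  Then for every integer `L`: `G'` has a `k`-way partitioning
with all parts of size exactly `n'/k` and connectivity cost at most `L` iff `G` has an
`ε`-balanced `k`-way partitioning of connectivity cost at most `L`; and the same
equivalence holds for the cut-net cost. -/
theorem isolated_nodes_reduction {α : Type*} [Fintype α] [DecidableEq α]
    (k : ℕ) (hk : 2 ≤ k) (ε : ℝ) (hε : 0 < ε)
    (E : Finset (Finset α)) (m : ℕ) (hm : (m : ℝ) = ε * Fintype.card α)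
    (hdvd : k ∣ Fintype.card α + m) (L : ℤ) :
    ((∃ P' : α ⊕ Fin m → Fin k,
        (∀ i : Fin k,
          (Finset.univ.filter fun a => P' a = i).card = (Fintype.card α + m) / k) ∧
        ((∑ e ∈ E.image (fun e => e.image (Sum.inl : α → α ⊕ Fin m)),
            ((e.image P').card - 1) : ℕ) : ℤ) ≤ L) ↔
      (∃ P : α → Fin k,
        (∀ i : Fin k, ((Finset.univ.filter fun a => P a = i).card : ℝ) ≤
          (1 + ε) * Fintype.card α / k) ∧
        ((∑ e ∈ E, ((e.image P).card - 1) : ℕ) : ℤ) ≤ L)) ∧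
    ((∃ P' : α ⊕ Fin m → Fin k,
        (∀ i : Fin k,
          (Finset.univ.filter fun a => P' a = i).card = (Fintype.card α + m) / k) ∧
        ((((E.image (fun e => e.image (Sum.inl : α → α ⊕ Fin m))).filter
            fun e => 1 < (e.image P').card).card : ℕ) : ℤ) ≤ L) ↔
      (∃ P : α → Fin k,
        (∀ i : Fin k, ((Finset.univ.filter fun a => P a = i).card : ℝ) ≤
          (1 + ε) * Fintype.card α / k) ∧
        (((E.filter fun e => 1 < (e.image P).card).card : ℕ) : ℤ) ≤ L)) :=
  isolated_nodes_reduction_general k ε E m hm hdvd L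
end

section
/- Let G be a hypergraph on a node set V of size 2q with nonempty hyperedges, each hyperedge e carrying a weight w_e ∈ ℕ, and let M be a perfect matching of V. Consider the partitioning of V into the q pairs of M, and for each hyperedge e let λ_e denote the number of pairs of M intersecting e. Then ∑_{e∈E} w_e·(λ_e − 1) = ∑_{e∈E} w_e·(|e| − 1) − ∑_{{u,v}∈M} w({u,v}), where w({u,v}) denotes the total weight of the hyperedges containing both u and v. Consequently, a perfect matching M minimizes the weighted connectivity cost ∑_e w_e·(λ_e − 1) of the associated pairing if and only if M is a maximum-weight perfect matching of the complete graph on V with edge weights w({u,v}). -/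
open Finset

variable {α : Type*} [Fintype α] [DecidableEq α]

/-- The pairs of the perfect matching given by a fixed-point-free involution `f`. -/
def matchPairs (f : α → α) : Finset (Finset α) :=
  Finset.univ.image fun a => ({a, f a} : Finset α)

/-- `λ_e`: the number of pairs of the matching given by `f` intersecting `e`. -/
def pairLambda (f : α → α) (e : Finset α) : ℕ :=
  (e.image fun a => ({a, f a} : Finset α)).card

/-- The weighted connectivity cost `∑_e w_e·(λ_e - 1)` of the pairing given by `f`. -/
def pairConnCost (E : Finset (Finset α)) (w : Finset α → ℕ) (f : α → α) : ℕ :=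
  ∑ e ∈ E, w e * (pairLambda f e - 1)

/-- The total matching weight `∑_{{u,v} ∈ M} w({u,v})`, where `w({u,v})` is the total
weight of the hyperedges containing both `u` and `v`. -/
def pairMatchWeight (E : Finset (Finset α)) (w : Finset α → ℕ) (f : α → α) : ℕ :=
  ∑ p ∈ matchPairs f, ∑ e ∈ E.filter (fun e => p ⊆ e), w e

lemma card_eq_lambda_add (f : α → α) (hinv : ∀ a, f (f a) = a) (hnf : ∀ a, f a ≠ a)
    (e : Finset α) :
    e.card = pairLambda f e + ((matchPairs f).filter (fun p => p ⊆ e)).card := by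
  classical
  set P := e.image (fun a => ({a, f a} : Finset α)) with hP
  have hfiber : ∀ p ∈ P, e.filter (fun a => ({a, f a} : Finset α) = p) = e ∩ p := by
    intro p hp
    ext a
    simp only [mem_filter, mem_inter]
    constructor
    · rintro ⟨ha, rfl⟩; exact ⟨ha, by simp⟩
    · rintro ⟨ha, hap⟩
      obtain ⟨b, hb, rfl⟩ := mem_image.mp hp
      refine ⟨ha, ?_⟩
      rcases mem_insert.mp hap with rfl | h
      · rfl
      · simp only [mem_singleton] at h
        subst h
        rw [hinv]
        ext x; simp [or_comm]
  have h1 : e.card = ∑ p ∈ P, (e ∩ p).card := by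
    rw [Finset.card_eq_sum_card_fiberwise (f := fun a => ({a, f a} : Finset α))
      (t := P) (fun a ha => mem_image_of_mem _ ha)]
    exact Finset.sum_congr rfl (fun p hp => by rw [hfiber p hp])
  have h2 : ∀ p ∈ P, (e ∩ p).card = if p ⊆ e then 2 else 1 := by
    intro p hp
    obtain ⟨b, hb, rfl⟩ := mem_image.mp hp
    by_cases hsub : ({b, f b} : Finset α) ⊆ e
    · rw [if_pos hsub, (Finset.inter_eq_right).mpr hsub]
      rw [Finset.card_insert_of_notMem (by simp [Ne.symm (hnf b)]), Finset.card_singleton]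
    · rw [if_neg hsub]
      have hfb : f b ∉ e := by
        intro hfb
        exact hsub (by intro x hx; rcases mem_insert.mp hx with rfl | hx
                       · exact hb
                       · simp only [mem_singleton] at hx; subst hx; exact hfb)
      have : e ∩ ({b, f b} : Finset α) = {b} := by
        ext x
        simp only [mem_inter, mem_insert, mem_singleton]
        constructor
        · rintro ⟨hx, rfl | rfl⟩
          · rfl
          · exact absurd hx hfb
        · rintro rfl; exact ⟨hb, Or.inl rfl⟩
      rw [this, Finset.card_singleton]
  have hPfilter : P.filter (fun p => p ⊆ e) = (matchPairs f).filter (fun p => p ⊆ e) := by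
    ext p
    simp only [mem_filter, hP, matchPairs, mem_image, mem_univ, true_and]
    constructor
    · rintro ⟨⟨b, hb, rfl⟩, hsub⟩; exact ⟨⟨b, rfl⟩, hsub⟩
    · rintro ⟨⟨b, rfl⟩, hsub⟩
      exact ⟨⟨b, hsub (mem_insert_self _ _), rfl⟩, hsub⟩
  have h3 : ∑ p ∈ P, (e ∩ p).card = P.card + (P.filter (fun p => p ⊆ e)).card := by
    rw [Finset.sum_congr rfl h2]
    have : ∀ p ∈ P, (if p ⊆ e then 2 else 1) = 1 + (if p ⊆ e then 1 else 0) := by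
      intro p _; split <;> rfl
    rw [Finset.sum_congr rfl this, Finset.sum_add_distrib, Finset.sum_const]
    rw [Finset.card_filter, smul_eq_mul, mul_one]
  rw [h1, h3, hPfilter]
  rfl

lemma key_identity (E : Finset (Finset α)) (hne : ∀ e ∈ E, e.Nonempty) (w : Finset α → ℕ)
    (f : α → α) (hinv : ∀ a, f (f a) = a) (hnf : ∀ a, f a ≠ a) :
    pairConnCost E w f + pairMatchWeight E w f = ∑ e ∈ E, w e * (e.card - 1) := by
  classical
  have hmw : pairMatchWeight E w f
      = ∑ e ∈ E, w e * ((matchPairs f).filter (fun p => p ⊆ e)).card := by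
    unfold pairMatchWeight
    simp_rw [Finset.sum_filter]
    rw [Finset.sum_comm]
    refine Finset.sum_congr rfl fun e _ => ?_
    rw [Finset.sum_ite, Finset.sum_const, Finset.sum_const_zero, add_zero, smul_eq_mul,
      mul_comm]
  rw [hmw]
  unfold pairConnCost
  rw [← Finset.sum_add_distrib]
  refine Finset.sum_congr rfl fun e he => ?_
  have hc := card_eq_lambda_add f hinv hnf e
  have hl : 1 ≤ pairLambda f e := Finset.card_pos.mpr ((hne e he).image _)
  rw [← Nat.mul_add]
  congr 1
  omega

/-- **Matching identity for two-level hierarchy assignment with `b₂ = 2`.**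
On a node set of size `2q` with nonempty weighted hyperedges, for every perfect matching
(fixed-point-free involution `f`) we have
`∑_e w_e·(λ_e - 1) + ∑_{{u,v}∈M} w({u,v}) = ∑_e w_e·(|e| - 1)`.
Consequently a perfect matching minimizes the weighted connectivity cost iff it is a
maximum-weight perfect matching for the pair weights `w({u,v})`. -/
theorem matching_identity (q : ℕ) (hq : Fintype.card α = 2 * q)
    (E : Finset (Finset α)) (hne : ∀ e ∈ E, e.Nonempty) (w : Finset α → ℕ)
    (f : α → α) (hinv : ∀ a, f (f a) = a) (hnf : ∀ a, f a ≠ a) :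
    pairConnCost E w f + pairMatchWeight E w f = ∑ e ∈ E, w e * (e.card - 1) ∧
    ((∀ g : α → α, (∀ a, g (g a) = a) → (∀ a, g a ≠ a) →
        pairConnCost E w f ≤ pairConnCost E w g) ↔
      (∀ g : α → α, (∀ a, g (g a) = a) → (∀ a, g a ≠ a) →
        pairMatchWeight E w g ≤ pairMatchWeight E w f)) := by
  have hf := key_identity E hne w f hinv hnf
  refine ⟨hf, ?_⟩
  constructor
  · intro h g hg1 hg2
    have hg := key_identity E hne w g hg1 hg2
    have := h g hg1 hg2
    omega
  · intro h g hg1 hg2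
    have hg := key_identity E hne w g hg1 hg2
    have := h g hg1 hg2
    omega
end

section
/- Fix ε ≥ 0, d ≥ 1, branching factors b_1, …, b_d ≥ 2 with k = b_1⋯b_d, and reals g_1 ≥ g_2 ≥ … ≥ g_d = 1. Let G be a hypergraph on n nodes and let P be an ε-balanced k-way partitioning of G that minimizes the connectivity cost among all ε-balanced k-way partitionings of G. Then for every bijective assignment of the k parts of P to the k leaf positions (j_1, …, j_d) ∈ [b_1]×…×[b_d] of the hierarchy, the hierarchical cost of the resulting hierarchical partitioning is at most g_1 times the minimum hierarchical cost over all ε-balanced hierarchical k-way partitionings of G. In other words, the two-step method (an optimal standard partitioning followed by any hierarchy assignment) is a g_1-approximation for the hierarchical partitioning problem. -/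
open Finset

/-- The length-`i` prefix of the hierarchical part index of a node. -/
def prefMap {α : Type*} {d : ℕ} (b : Fin d → ℕ) (P : α → ∀ j : Fin d, Fin (b j))
    (i : ℕ) (a : α) :
    ∀ j : Fin (min i d), Fin (b (Fin.castLE (min_le_right i d) j)) :=
  fun j => P a (Fin.castLE (min_le_right i d) j)

/-- `λ_e^{(i)}`: the number of distinct length-`i` prefixes among the part indices of
the nodes of the hyperedge `e`. -/
def lamLevel {α : Type*} [DecidableEq α] {d : ℕ} (b : Fin d → ℕ)
    (P : α → ∀ j : Fin d, Fin (b j)) (e : Finset α) (i : ℕ) : ℕ :=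
  (e.image (prefMap b P i)).card

/-- The hierarchical cost `∑_{e∈E} ∑_{i=1}^d g_i·(λ_e^{(i)} - λ_e^{(i-1)})`. -/
noncomputable def hierCost {α : Type*} [DecidableEq α] {d : ℕ} (b : Fin d → ℕ)
    (g : ℕ → ℝ) (E : Finset (Finset α)) (P : α → ∀ j : Fin d, Fin (b j)) : ℝ :=
  ∑ e ∈ E, ∑ i ∈ Finset.range d,
    g (i + 1) * ((lamLevel b P e (i + 1) : ℝ) - (lamLevel b P e i : ℝ))

lemma lamLevel_mono {α : Type*} [DecidableEq α] {d : ℕ} (b : Fin d → ℕ)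
    (P : α → ∀ j : Fin d, Fin (b j)) (e : Finset α) (i : ℕ) :
    lamLevel b P e i ≤ lamLevel b P e (i+1) := by
  have h : min i d ≤ min (i+1) d := by omega
  have heq : e.image (prefMap b P i)
      = (e.image (prefMap b P (i+1))).image (fun v j => v (Fin.castLE h j)) := by
    rw [Finset.image_image]; rfl
  rw [lamLevel, lamLevel, heq]
  exact Finset.card_image_le

lemma lamLevel_d {α : Type*} [DecidableEq α] {d : ℕ} (b : Fin d → ℕ)
    (P : α → ∀ j : Fin d, Fin (b j)) (e : Finset α) :
    lamLevel b P e d = (e.image P).card := by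
  apply le_antisymm
  · have heq : e.image (prefMap b P d)
        = (e.image P).image
            (fun v (j : Fin (min d d)) => v (Fin.castLE (min_le_right d d) j)) := by
      rw [Finset.image_image]; rfl
    rw [lamLevel, heq]
    exact Finset.card_image_le
  · have heq : e.image P
        = (e.image (prefMap b P d)).image
            (fun v (j : Fin d) => v (Fin.castLE (Nat.le_min.mpr ⟨le_rfl, le_rfl⟩) j)) := by
      rw [Finset.image_image]; rfl
    rw [lamLevel, heq]
    exact Finset.card_image_le

lemma lamLevel_zero {α : Type*} [DecidableEq α] {d : ℕ} (b : Fin d → ℕ)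
    (P : α → ∀ j : Fin d, Fin (b j)) (e : Finset α) (he : e.Nonempty) :
    lamLevel b P e 0 = 1 := by
  obtain ⟨a, ha⟩ := he
  rw [lamLevel, Finset.card_eq_one]
  refine ⟨prefMap b P 0 a, ?_⟩
  ext v
  simp only [Finset.mem_image, Finset.mem_singleton]
  constructor
  · rintro ⟨x, hx, rfl⟩
    funext j
    exact absurd j.isLt (by omega)
  · rintro rfl; exact ⟨a, ha, rfl⟩

lemma g_antitone (g : ℕ → ℝ) (d : ℕ)
    (hmono : ∀ i : ℕ, 1 ≤ i → i < d → g (i + 1) ≤ g i) :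
    ∀ j i : ℕ, 1 ≤ i → i ≤ j → j ≤ d → g j ≤ g i := by
  intro j
  induction j with
  | zero => intro i h1 h2 _; omega
  | succ n ih =>
    intro i h1 h2 hd'
    rcases Nat.eq_or_lt_of_le h2 with h | h
    · exact h ▸ le_rfl
    · have h3 : i ≤ n := by omega
      exact le_trans (hmono n (le_trans h1 h3) (by omega)) (ih i h1 h3 (by omega))

lemma tele_cast {α : Type*} [DecidableEq α] {d : ℕ} (b : Fin d → ℕ)
    (F : α → ∀ j : Fin d, Fin (b j)) (E : Finset (Finset α)) :
    ∑ e ∈ E, ((lamLevel b F e d : ℝ) - lamLevel b F e 0)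
      = ((∑ e ∈ E, ((e.image F).card - 1) : ℕ) : ℝ) := by
  rw [Nat.cast_sum]
  refine Finset.sum_congr rfl fun e _ => ?_
  rcases e.eq_empty_or_nonempty with rfl | he
  · simp [lamLevel, prefMap]
  · have h1 : 1 ≤ (e.image F).card := Finset.card_pos.mpr (he.image F)
    rw [lamLevel_d, lamLevel_zero b F e he, Nat.cast_sub h1]

/-- **The two-step method is a `g_1`-approximation.**  Let `P` be an `ε`-balanced
`k`-way partitioning (`k = b_1⋯b_d`) of minimum connectivity cost among all `ε`-balanced
`k`-way partitionings.  Then for every bijective assignment `σ` of the `k` parts of `P`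
to the `k` leaf positions of the hierarchy, the hierarchical cost of `σ ∘ P` is at most
`g_1` times the hierarchical cost of every `ε`-balanced hierarchical `k`-way
partitioning `R` (in particular, at most `g_1` times the minimum hierarchical cost). -/
theorem two_step_method_approx {α : Type*} [Fintype α] [DecidableEq α]
    (ε : ℝ) (hε : 0 ≤ ε) (d : ℕ) (hd : 1 ≤ d) (b : Fin d → ℕ) (hb : ∀ i, 2 ≤ b i)
    (g : ℕ → ℝ) (hmono : ∀ i : ℕ, 1 ≤ i → i < d → g (i + 1) ≤ g i) (hg : g d = 1)
    (E : Finset (Finset α)) (P : α → Fin (∏ i, b i))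
    (hbal : ∀ i : Fin (∏ i, b i),
      ((Finset.univ.filter fun a => P a = i).card : ℝ) ≤
        (1 + ε) * Fintype.card α / ((∏ i, b i : ℕ) : ℝ))
    (hopt : ∀ Q : α → Fin (∏ i, b i),
      (∀ i : Fin (∏ i, b i),
        ((Finset.univ.filter fun a => Q a = i).card : ℝ) ≤
          (1 + ε) * Fintype.card α / ((∏ i, b i : ℕ) : ℝ)) →
      (∑ e ∈ E, ((e.image P).card - 1)) ≤ ∑ e ∈ E, ((e.image Q).card - 1))
    (σ : Fin (∏ i, b i) ≃ (∀ j : Fin d, Fin (b j))) :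
    ∀ R : α → ∀ j : Fin d, Fin (b j),
      (∀ v : ∀ j : Fin d, Fin (b j),
        ((Finset.univ.filter fun a => R a = v).card : ℝ) ≤
          (1 + ε) * Fintype.card α / ((∏ i, b i : ℕ) : ℝ)) →
      hierCost b g E (fun a => σ (P a)) ≤ g 1 * hierCost b g E R := by
  intro R hR
  have hg1 : (1 : ℝ) ≤ g 1 := hg ▸ g_antitone g d hmono d 1 le_rfl hd le_rfl
  have hg1' : (0 : ℝ) ≤ g 1 := le_trans zero_le_one hg1
  -- the induced flat partition of R
  set Q : α → Fin (∏ i, b i) := fun a => σ.symm (R a) with hQ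
  have hQbal : ∀ i : Fin (∏ i, b i),
      ((Finset.univ.filter fun a => Q a = i).card : ℝ) ≤
        (1 + ε) * Fintype.card α / ((∏ i, b i : ℕ) : ℝ) := by
    intro i
    have h : (Finset.univ.filter fun a => Q a = i)
        = (Finset.univ.filter fun a => R a = σ i) := by
      apply Finset.filter_congr
      intro a _
      simp [hQ, Equiv.symm_apply_eq]
    rw [h]; exact hR (σ i)
  have hconn := hopt Q hQbal
  have hPim : ∀ e : Finset α, (e.image (fun a => σ (P a))).card = (e.image P).card := by
    intro e
    rw [show e.image (fun a => σ (P a)) = (e.image P).image σ from (Finset.image_image).symm]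
    exact Finset.card_image_of_injective _ σ.injective
  have hQim : ∀ e : Finset α, (e.image Q).card = (e.image R).card := by
    intro e
    rw [show e.image Q = (e.image R).image σ.symm from (Finset.image_image).symm]
    exact Finset.card_image_of_injective _ σ.symm.injective
  -- telescoped sums
  have key1 : hierCost b g E (fun a => σ (P a))
      ≤ g 1 * ∑ e ∈ E, ((lamLevel b (fun a => σ (P a)) e d : ℝ)
          - lamLevel b (fun a => σ (P a)) e 0) := by
    rw [hierCost, Finset.mul_sum]
    refine Finset.sum_le_sum fun e _ => ?_
    rw [← Finset.sum_range_sub (fun i => (lamLevel b (fun a => σ (P a)) e i : ℝ)) d,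
      Finset.mul_sum]
    refine Finset.sum_le_sum fun i hi => ?_
    have hΔ : (0 : ℝ) ≤ (lamLevel b (fun a => σ (P a)) e (i+1) : ℝ)
        - lamLevel b (fun a => σ (P a)) e i := by
      have := lamLevel_mono b (fun a => σ (P a)) e i
      have := Nat.cast_le (α := ℝ).mpr this
      linarith
    have hgi : g (i + 1) ≤ g 1 := by
      simp only [Finset.mem_range] at hi
      exact g_antitone g d hmono (i+1) 1 le_rfl (by omega) (by omega)
    exact mul_le_mul_of_nonneg_right hgi hΔ
  have key2 : ∑ e ∈ E, ((lamLevel b R e d : ℝ) - lamLevel b R e 0)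
      ≤ hierCost b g E R := by
    rw [hierCost]
    refine Finset.sum_le_sum fun e _ => ?_
    rw [← Finset.sum_range_sub (fun i => (lamLevel b R e i : ℝ)) d]
    refine Finset.sum_le_sum fun i hi => ?_
    have hΔ : (0 : ℝ) ≤ (lamLevel b R e (i+1) : ℝ) - lamLevel b R e i := by
      have := Nat.cast_le (α := ℝ).mpr (lamLevel_mono b R e i)
      linarith
    have hgi : (1 : ℝ) ≤ g (i + 1) := by
      simp only [Finset.mem_range] at hi
      exact hg ▸ g_antitone g d hmono d (i+1) (by omega) (by omega) le_rfl
    nlinarith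
  calc hierCost b g E (fun a => σ (P a))
      ≤ g 1 * ∑ e ∈ E, ((lamLevel b (fun a => σ (P a)) e d : ℝ)
          - lamLevel b (fun a => σ (P a)) e 0) := key1
    _ = g 1 * ((∑ e ∈ E, ((e.image P).card - 1) : ℕ) : ℝ) := by
        rw [tele_cast]
        congr 1
        exact_mod_cast congrArg (Nat.cast (R := ℝ))
          (Finset.sum_congr rfl fun e _ => by rw [hPim e])
    _ ≤ g 1 * ((∑ e ∈ E, ((e.image Q).card - 1) : ℕ) : ℝ) :=
        mul_le_mul_of_nonneg_left (Nat.cast_le.mpr hconn) hg1'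
    _ = g 1 * ∑ e ∈ E, ((lamLevel b R e d : ℝ) - lamLevel b R e 0) := by
        rw [tele_cast]
        congr 1
        exact_mod_cast congrArg (Nat.cast (R := ℝ))
          (Finset.sum_congr rfl fun e _ => by rw [hQim e])
    _ ≤ g 1 * hierCost b g E R := mul_le_mul_of_nonneg_left key2 hg1'
end

section
/- There exist constants c > 0 and C such that for infinitely many n divisible by 12 there is a hypergraph G on n nodes with the following properties: (a) G admits a 4-way partitioning with all parts of size exactly n/4 and connectivity cost at most C; (b) G admits a bisection (a 2-way partitioning with both parts of size exactly n/2) of connectivity cost 0; and (c) for every minimum-cost bisection (P₁, P₂) of G and for every bisection of P₁ into two parts of size n/4 and every bisection of P₂ into two parts of size n/4, the resulting 4-way partitioning has connectivity cost at least c·n. Consequently, recursive bipartitioning can return a solution a factor Θ(n) worse than the optimal direct 4-way partitioning, even if each recursive step is optimal separately. -/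
open Finset

namespace RBB

lemma fin_filter_card {n : ℕ} (a b : ℕ) (hb : b ≤ n) :
    ((univ : Finset (Fin n)).filter (fun x => a ≤ x.val ∧ x.val < b)).card = b - a := by
  rw [← Nat.card_Ico a b]
  apply Finset.card_bij (fun x _ => x.val)
  · intro x hx
    simp only [mem_filter] at hx
    simp [Finset.mem_Ico, hx.2.1, hx.2.2]
  · intro x _ y _ h
    exact Fin.val_injective h
  · intro y hy
    simp only [Finset.mem_Ico] at hy
    exact ⟨⟨y, lt_of_lt_of_le hy.2 hb⟩, by simp [hy.1, hy.2], rfl⟩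

lemma card_two_intervals {n : ℕ} (a b c d : ℕ) (h1 : b ≤ n) (h2 : b ≤ c) (h4 : d ≤ n) :
    ((univ : Finset (Fin n)).filter
      (fun x => (a ≤ x.val ∧ x.val < b) ∨ (c ≤ x.val ∧ x.val < d))).card
      = (b - a) + (d - c) := by
  rw [filter_or, card_union_of_disjoint, fin_filter_card a b h1,
    fin_filter_card c d h4]
  rw [Finset.disjoint_left]
  intro x hx hx'
  simp only [mem_filter] at hx hx'
  omega

variable (t : ℕ)

def hub (v : Fin (24*t)) : Fin (24*t) :=
  ⟨if v.val < 8*t then (if v.val < 4*t then 0 else 4*t) else 8*t,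
   by have := v.isLt; split_ifs <;> omega⟩

def eX : Finset (Fin (24*t)) := univ.filter (fun x => 0 ≤ x.val ∧ x.val < 12*t)
def eY : Finset (Fin (24*t)) := univ.filter (fun x => 12*t ≤ x.val ∧ x.val < 24*t)

def stars : Finset (Finset (Fin (24*t))) :=
  (univ.filter (fun v : Fin (24*t) =>
    v.val < 12*t ∧ v.val ≠ 0 ∧ v.val ≠ 4*t ∧ v.val ≠ 8*t)).image
    (fun v => {hub t v, v})

def E : Finset (Finset (Fin (24*t))) := insert (eX t) (insert (eY t) (stars t))

lemma card_eX (ht : 1 ≤ t) : (eX t).card = 12*t := by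
  have := fin_filter_card (n := 24*t) 0 (12*t) (by omega)
  simpa [eX] using this

lemma card_eY (ht : 1 ≤ t) : (eY t).card = 12*t := by
  have := fin_filter_card (n := 24*t) (12*t) (24*t) (by omega)
  rw [eY, this]
  omega

lemma mem_stars_card {e : Finset (Fin (24*t))} (he : e ∈ stars t) : e.card ≤ 2 := by
  rw [stars, mem_image] at he
  obtain ⟨v, _, rfl⟩ := he
  exact le_trans (card_insert_le _ _) (by simp)

lemma eX_notMem_stars (ht : 1 ≤ t) : eX t ∉ stars t := fun h => by
  have := mem_stars_card t h
  rw [card_eX t ht] at this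
  omega

lemma eY_notMem_stars (ht : 1 ≤ t) : eY t ∉ stars t := fun h => by
  have := mem_stars_card t h
  rw [card_eY t ht] at this
  omega

lemma eX_ne_eY (ht : 1 ≤ t) : eX t ≠ eY t := fun h => by
  have h0 : (⟨0, by omega⟩ : Fin (24*t)) ∈ eX t := by simp [eX]; omega
  rw [h] at h0
  simp [eY] at h0
  omega

lemma sum_E (ht : 1 ≤ t) (f : Finset (Fin (24*t)) → ℕ) :
    ∑ e ∈ E t, f e = f (eX t) + f (eY t) + ∑ e ∈ stars t, f e := by
  rw [E, Finset.sum_insert, Finset.sum_insert (eY_notMem_stars t ht)]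
  · ring
  · simp only [Finset.mem_insert]
    push_neg
    exact ⟨eX_ne_eY t ht, eX_notMem_stars t ht⟩


def P2 : Fin (24*t) → Bool := fun a => decide (a.val < 12*t)

lemma P2_balanced (ht : 1 ≤ t) (i : Bool) :
    ((univ : Finset (Fin (24*t))).filter (fun a => P2 t a = i)).card = 12*t := by
  cases i
  · have h : ((univ : Finset (Fin (24*t))).filter (fun a => P2 t a = false))
        = univ.filter (fun x => 12*t ≤ x.val ∧ x.val < 24*t) := by
      apply filter_congr
      intro x _
      simp only [P2, decide_eq_false_iff_not, not_lt, eq_iff_iff]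
      have := x.isLt
      constructor
      · intro h; exact ⟨h, this⟩
      · intro h; exact h.1
    rw [h, fin_filter_card _ _ (le_refl _)]
    omega
  · have h : ((univ : Finset (Fin (24*t))).filter (fun a => P2 t a = true))
        = univ.filter (fun x => 0 ≤ x.val ∧ x.val < 12*t) := by
      apply filter_congr
      intro x _
      simp [P2]
    rw [h, fin_filter_card _ _ (by omega)]; omega

lemma term_eq_zero {α β : Type*} [DecidableEq β] (e : Finset α) (f : α → β) (c : β)
    (h : ∀ x ∈ e, f x = c) : (e.image f).card - 1 = 0 := by
  have : (e.image f).card ≤ 1 := Finset.card_le_one.mpr (by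
    intro a ha b hb
    obtain ⟨x, hx, rfl⟩ := Finset.mem_image.mp ha
    obtain ⟨y, hy, rfl⟩ := Finset.mem_image.mp hb
    rw [h x hx, h y hy])
  omega

lemma hub_val_lt (ht : 1 ≤ t) (v : Fin (24*t)) : (hub t v).val < 12*t := by
  simp only [hub]
  split_ifs <;> omega

lemma cost_P2_zero (ht : 1 ≤ t) :
    (∑ e ∈ E t, ((e.image (P2 t)).card - 1)) = 0 := by
  apply Finset.sum_eq_zero
  intro e he
  simp only [E, Finset.mem_insert] at he
  rcases he with rfl | rfl | he
  · apply term_eq_zero _ _ true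
    intro x hx
    simp only [eX, mem_filter] at hx
    simp [P2, hx.2.2]
  · apply term_eq_zero _ _ false
    intro x hx
    simp only [eY, mem_filter] at hx
    simp [P2]
    omega
  · simp only [stars, mem_image] at he
    obtain ⟨v, hv, rfl⟩ := he
    simp only [mem_filter] at hv
    apply term_eq_zero _ _ true
    intro x hx
    simp only [Finset.mem_insert, Finset.mem_singleton] at hx
    rcases hx with rfl | rfl
    · simp [P2, hub_val_lt t ht v]
    · simp [P2, hv.2.1]


lemma mem_eX (x : Fin (24*t)) : x ∈ eX t ↔ x.val < 12*t := by
  simp [eX]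

lemma mem_eY (x : Fin (24*t)) : x ∈ eY t ↔ 12*t ≤ x.val := by
  simp only [eY, mem_filter, mem_univ, true_and]
  have := x.isLt
  constructor
  · exact fun h => h.1
  · exact fun h => ⟨h, this⟩

def P4 : Fin (24*t) → Fin 4 := fun a =>
  if a.val < 4*t then 0 else if a.val < 8*t then 1 else if a.val < 12*t then 2
  else if a.val < 14*t then 0 else if a.val < 16*t then 1 else if a.val < 18*t then 2 else 3

lemma P4_balanced (ht : 1 ≤ t) (i : Fin 4) :
    ((univ : Finset (Fin (24*t))).filter (fun a => P4 t a = i)).card = 6*t := by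
  fin_cases i
  · show ((univ : Finset (Fin (24*t))).filter (fun a => P4 t a = 0)).card = 6*t
    have h : ((univ : Finset (Fin (24*t))).filter (fun a => P4 t a = 0))
        = univ.filter (fun x => (0 ≤ x.val ∧ x.val < 4*t) ∨ (12*t ≤ x.val ∧ x.val < 14*t)) := by
      apply filter_congr
      intro x _
      simp only [P4, eq_iff_iff]
      split_ifs <;> simp <;> omega
    rw [h, card_two_intervals 0 (4*t) (12*t) (14*t) (by omega) (by omega) (by omega)]
    omega
  · show ((univ : Finset (Fin (24*t))).filter (fun a => P4 t a = 1)).card = 6*t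
    have h : ((univ : Finset (Fin (24*t))).filter (fun a => P4 t a = 1))
        = univ.filter (fun x => (4*t ≤ x.val ∧ x.val < 8*t) ∨ (14*t ≤ x.val ∧ x.val < 16*t)) := by
      apply filter_congr
      intro x _
      simp only [P4, eq_iff_iff]
      split_ifs <;> simp <;> omega
    rw [h, card_two_intervals (4*t) (8*t) (14*t) (16*t) (by omega) (by omega) (by omega)]
    omega
  · show ((univ : Finset (Fin (24*t))).filter (fun a => P4 t a = 2)).card = 6*t
    have h : ((univ : Finset (Fin (24*t))).filter (fun a => P4 t a = 2))
        = univ.filter (fun x => (8*t ≤ x.val ∧ x.val < 12*t) ∨ (16*t ≤ x.val ∧ x.val < 18*t)) := by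
      apply filter_congr
      intro x _
      simp only [P4, eq_iff_iff]
      split_ifs <;> simp <;> omega
    rw [h, card_two_intervals (8*t) (12*t) (16*t) (18*t) (by omega) (by omega) (by omega)]
    omega
  · show ((univ : Finset (Fin (24*t))).filter (fun a => P4 t a = 3)).card = 6*t
    have h : ((univ : Finset (Fin (24*t))).filter (fun a => P4 t a = 3))
        = univ.filter (fun x => 18*t ≤ x.val ∧ x.val < 24*t) := by
      apply filter_congr
      intro x _
      simp only [P4, eq_iff_iff]
      split_ifs <;> simp <;> omega
    rw [h, fin_filter_card _ _ (le_refl _)]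
    omega

lemma P4_hub (ht : 1 ≤ t) (v : Fin (24*t)) (hv : v.val < 12*t) : P4 t (hub t v) = P4 t v := by
  simp only [P4, hub]
  split_ifs <;> first | rfl | omega

lemma cost_P4 (ht : 1 ≤ t) :
    (∑ e ∈ E t, ((e.image (P4 t)).card - 1)) ≤ 6 := by
  rw [sum_E t ht]
  have h1 : ((eX t).image (P4 t)).card ≤ 4 :=
    le_trans (card_le_card (subset_univ _)) (by simp)
  have h2 : ((eY t).image (P4 t)).card ≤ 4 :=
    le_trans (card_le_card (subset_univ _)) (by simp)
  have h3 : (∑ e ∈ stars t, ((e.image (P4 t)).card - 1)) = 0 := by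
    apply Finset.sum_eq_zero
    intro e he
    simp only [stars, mem_image] at he
    obtain ⟨v, hv, rfl⟩ := he
    simp only [mem_filter] at hv
    apply term_eq_zero _ _ (P4 t v)
    intro x hx
    simp only [Finset.mem_insert, Finset.mem_singleton] at hx
    rcases hx with rfl | rfl
    · exact P4_hub t ht v hv.2.1
    · rfl
  omega

lemma part_c (ht : 1 ≤ t) (P : Fin (24*t) → Bool)
    (hP : ∀ i, ((univ : Finset (Fin (24*t))).filter fun a => P a = i).card = 12*t)
    (hc0 : (∑ e ∈ E t, ((e.image P).card - 1)) = 0)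
    (R : Fin (24*t) → Bool × Bool)
    (hR1 : ∀ x, (R x).1 = P x)
    (hR4 : ∀ v, ((univ : Finset (Fin (24*t))).filter fun a => R a = v).card = 6*t) :
    t ≤ ∑ e ∈ E t, ((e.image R).card - 1) := by
  have hzero : ∀ e ∈ E t, ((e.image P).card - 1) = 0 := by
    intro e he
    have := (Finset.sum_eq_zero_iff).mp hc0 e he
    omega
  have hconst : ∀ e ∈ E t, ∀ x ∈ e, ∀ y ∈ e, P x = P y := by
    intro e he x hx y hy
    have h1 : (e.image P).card ≤ 1 := by have := hzero e he; omega
    exact Finset.card_le_one.mp h1 _ (Finset.mem_image_of_mem P hx)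
      _ (Finset.mem_image_of_mem P hy)
  have heX : eX t ∈ E t := by simp [E]
  have heY : eY t ∈ E t := by simp [E]
  set p := P ⟨0, by omega⟩ with hp
  set q := P ⟨12*t, by omega⟩ with hq
  have hXp : ∀ x : Fin (24*t), x.val < 12*t → P x = p := by
    intro x hx
    exact hconst _ heX x ((mem_eX t x).mpr hx) _ ((mem_eX t ⟨0, by omega⟩).mpr (by simp; omega))
  have hYq : ∀ x : Fin (24*t), 12*t ≤ x.val → P x = q := by
    intro x hx
    exact hconst _ heY x ((mem_eY t x).mpr hx) _ ((mem_eY t ⟨12*t, by omega⟩).mpr (by simp))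
  have hqp : q ≠ p := by
    intro h
    have hall : ∀ a : Fin (24*t), P a = p := by
      intro a
      rcases lt_or_ge a.val (12*t) with h' | h'
      · exact hXp a h'
      · rw [hYq a h', h]
    have h0 : ((univ : Finset (Fin (24*t))).filter fun a => P a = !p) = ∅ := by
      apply Finset.filter_eq_empty_iff.mpr
      intro a _
      rw [hall a]
      simp
    have := hP (!p)
    rw [h0] at this
    simp at this
    omega
  have hPiff : ∀ x : Fin (24*t), P x = p ↔ x.val < 12*t := by
    intro x
    constructor
    · intro h
      by_contra h'
      exact hqp ((hYq x (by omega)).symm.trans h)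
    · exact hXp x
  have hRX : ∀ x : Fin (24*t), x.val < 12*t → R x = (p, (R x).2) := by
    intro x hx
    have : (R x).1 = p := (hR1 x).trans (hXp x hx)
    rw [← this]
  -- decomposition of the (p, true) fiber into the three groups
  have hsum : ((univ : Finset (Fin (24*t))).filter
        (fun x => 0 ≤ x.val ∧ x.val < 0 + 4*t ∧ R x = (p, true))).card
      + ((univ : Finset (Fin (24*t))).filter
        (fun x => 4*t ≤ x.val ∧ x.val < 4*t + 4*t ∧ R x = (p, true))).card
      + ((univ : Finset (Fin (24*t))).filter
        (fun x => 8*t ≤ x.val ∧ x.val < 8*t + 4*t ∧ R x = (p, true))).card = 6*t := by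
    have hdecomp : ((univ : Finset (Fin (24*t))).filter fun a => R a = (p, true))
        = (univ.filter (fun x => 0 ≤ x.val ∧ x.val < 0 + 4*t ∧ R x = (p, true)))
          ∪ ((univ.filter (fun x => 4*t ≤ x.val ∧ x.val < 4*t + 4*t ∧ R x = (p, true)))
          ∪ (univ.filter (fun x => 8*t ≤ x.val ∧ x.val < 8*t + 4*t ∧ R x = (p, true)))) := by
      rw [← filter_or, ← filter_or]
      apply filter_congr
      intro x _
      constructor
      · intro h
        have hx12 : x.val < 12*t := by
          apply (hPiff x).mp
          rw [← hR1 x, h]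
        rcases lt_or_ge x.val (4*t) with h1 | h1
        · left; exact ⟨by omega, by omega, h⟩
        rcases lt_or_ge x.val (8*t) with h2 | h2
        · right; left; exact ⟨by omega, by omega, h⟩
        · right; right; exact ⟨by omega, by omega, h⟩
      · rintro (⟨_, _, h⟩ | ⟨_, _, h⟩ | ⟨_, _, h⟩) <;> exact h
    have hd1 : Disjoint
        (univ.filter (fun x : Fin (24*t) => 4*t ≤ x.val ∧ x.val < 4*t + 4*t ∧ R x = (p, true)))
        (univ.filter (fun x : Fin (24*t) => 8*t ≤ x.val ∧ x.val < 8*t + 4*t ∧ R x = (p, true))) := by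
      rw [Finset.disjoint_left]
      intro a ha ha'
      simp only [mem_filter] at ha ha'
      omega
    have hd0 : Disjoint
        (univ.filter (fun x : Fin (24*t) => 0 ≤ x.val ∧ x.val < 0 + 4*t ∧ R x = (p, true)))
        ((univ.filter (fun x : Fin (24*t) => 4*t ≤ x.val ∧ x.val < 4*t + 4*t ∧ R x = (p, true)))
          ∪ (univ.filter (fun x : Fin (24*t) => 8*t ≤ x.val ∧ x.val < 8*t + 4*t ∧ R x = (p, true)))) := by
      rw [Finset.disjoint_left]
      intro a ha ha'
      simp only [mem_filter, Finset.mem_union] at ha ha'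
      omega
    have h6 := hR4 (p, true)
    rw [hdecomp, card_union_of_disjoint hd0, card_union_of_disjoint hd1] at h6
    omega
  -- within each group the (p,true) and (p,false) counts add to 4t
  have hgroupsum : ∀ g : ℕ, g = 0 ∨ g = 4*t ∨ g = 8*t →
      ((univ : Finset (Fin (24*t))).filter
        (fun x => g ≤ x.val ∧ x.val < g + 4*t ∧ R x = (p, true))).card
      + ((univ : Finset (Fin (24*t))).filter
        (fun x => g ≤ x.val ∧ x.val < g + 4*t ∧ R x = (p, false))).card = 4*t := by
    intro g hg
    have hdecomp : ((univ : Finset (Fin (24*t))).filter fun x => g ≤ x.val ∧ x.val < g + 4*t)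
        = (univ.filter (fun x => g ≤ x.val ∧ x.val < g + 4*t ∧ R x = (p, true)))
          ∪ (univ.filter (fun x => g ≤ x.val ∧ x.val < g + 4*t ∧ R x = (p, false))) := by
      rw [← filter_or]
      apply filter_congr
      intro x _
      constructor
      · intro h
        have hx12 : x.val < 12*t := by omega
        have hrx := hRX x hx12
        cases h2 : (R x).2
        · right; exact ⟨h.1, h.2, by rw [hrx, h2]⟩
        · left; exact ⟨h.1, h.2, by rw [hrx, h2]⟩
      · rintro (⟨h1, h2, _⟩ | ⟨h1, h2, _⟩) <;> exact ⟨h1, h2⟩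
    have hd : Disjoint
        (univ.filter (fun x : Fin (24*t) => g ≤ x.val ∧ x.val < g + 4*t ∧ R x = (p, true)))
        (univ.filter (fun x : Fin (24*t) => g ≤ x.val ∧ x.val < g + 4*t ∧ R x = (p, false))) := by
      rw [Finset.disjoint_left]
      intro a ha ha'
      simp only [mem_filter] at ha ha'
      rw [ha.2.2.2] at ha'
      simp at ha'
    have hcard := fin_filter_card (n := 24*t) g (g + 4*t) (by omega)
    rw [hdecomp, card_union_of_disjoint hd] at hcard
    omega
  -- pigeonhole: some group is split with at least t on each side
  have hpig : ∃ g : ℕ, (g = 0 ∨ g = 4*t ∨ g = 8*t) ∧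
      t ≤ ((univ : Finset (Fin (24*t))).filter
        (fun x => g ≤ x.val ∧ x.val < g + 4*t ∧ R x = (p, true))).card ∧
      ((univ : Finset (Fin (24*t))).filter
        (fun x => g ≤ x.val ∧ x.val < g + 4*t ∧ R x = (p, true))).card ≤ 3*t := by
    by_contra hcon
    push_neg at hcon
    have b0 := hgroupsum 0 (by omega)
    have b1 := hgroupsum (4*t) (by omega)
    have b2 := hgroupsum (8*t) (by omega)
    have h0 := hcon 0 (by omega)
    have h1 := hcon (4*t) (by omega)
    have h2 := hcon (8*t) (by omega)
    omega
  obtain ⟨g, hg, hgel, hgeu⟩ := hpig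
  have hgsum := hgroupsum g hg
  have hg24 : g + 4*t ≤ 12*t := by omega
  -- the hub of this group
  obtain ⟨b, hRh0⟩ : ∃ b : Bool, R ⟨g, by omega⟩ = (p, b) :=
    ⟨(R ⟨g, by omega⟩).2, hRX ⟨g, by omega⟩ (show g < 12*t by omega)⟩
  have hub_eq : ∀ v : Fin (24*t), g ≤ v.val → v.val < g + 4*t →
      hub t v = (⟨g, by omega⟩ : Fin (24*t)) := by
    intro v h1 h2
    apply Fin.ext
    simp only [hub]
    split_ifs <;> omega
  -- bad leaves: nodes of the group on the other side than the hub
  have hB'card : t ≤ ((univ : Finset (Fin (24*t))).filter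
      (fun v => g ≤ v.val ∧ v.val < g + 4*t ∧ R v = (p, !b))).card := by
    cases b
    · have he : ((univ : Finset (Fin (24*t))).filter
          (fun v => g ≤ v.val ∧ v.val < g + 4*t ∧ R v = (p, !false))).card
          = ((univ : Finset (Fin (24*t))).filter
          (fun v => g ≤ v.val ∧ v.val < g + 4*t ∧ R v = (p, true))).card := rfl
      rw [he]
      exact hgel
    · have he : ((univ : Finset (Fin (24*t))).filter
          (fun v => g ≤ v.val ∧ v.val < g + 4*t ∧ R v = (p, !true))).card
          = ((univ : Finset (Fin (24*t))).filter
          (fun v => g ≤ v.val ∧ v.val < g + 4*t ∧ R v = (p, false))).card := rfl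
      rw [he]
      omega
  set B' : Finset (Fin (24*t)) :=
    univ.filter (fun v => g ≤ v.val ∧ v.val < g + 4*t ∧ R v = (p, !b)) with hB'
  have hne : ∀ v ∈ B', v ≠ (⟨g, by omega⟩ : Fin (24*t)) := by
    intro v hv hveq
    rw [hB', mem_filter] at hv
    rw [hveq, hRh0] at hv
    have := hv.2.2.2
    simp [Prod.ext_iff] at this
  set D : Finset (Finset (Fin (24*t))) := B'.image (fun v => ({hub t v, v} : Finset _)) with hD
  have hDcard : D.card = B'.card := by
    apply Finset.card_image_of_injOn
    intro v hv w hw hvw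
    have hv' := mem_filter.mp (Finset.mem_coe.mp hv)
    have hw' := mem_filter.mp (Finset.mem_coe.mp hw)
    have hvw' : ({hub t v, v} : Finset (Fin (24*t))) = {hub t w, w} := hvw
    rw [hub_eq v hv'.2.1 hv'.2.2.1, hub_eq w hw'.2.1 hw'.2.2.1] at hvw'
    have hvmem : v ∈ ({(⟨g, by omega⟩ : Fin (24*t)), w} : Finset (Fin (24*t))) := by
      rw [← hvw']
      simp
    simp only [Finset.mem_insert, Finset.mem_singleton] at hvmem
    rcases hvmem with hveq | hveq
    · exact absurd hveq (hne v (Finset.mem_coe.mp hv))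
    · exact hveq
  have hDE : D ⊆ E t := by
    intro e he
    rw [hD, mem_image] at he
    obtain ⟨v, hv, rfl⟩ := he
    have hvne := hne v hv
    rw [hB', mem_filter] at hv
    have hvg : v.val ≠ g := fun h => hvne (Fin.ext h)
    simp only [E, stars, Finset.mem_insert, mem_image]
    right; right
    exact ⟨v, by simp only [mem_filter, mem_univ, true_and]; omega, rfl⟩
  have hDone : ∀ e ∈ D, 1 ≤ (e.image R).card - 1 := by
    intro e he
    rw [hD, mem_image] at he
    obtain ⟨v, hv, rfl⟩ := he
    rw [hB', mem_filter] at hv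
    have hhub : hub t v = (⟨g, by omega⟩ : Fin (24*t)) := hub_eq v hv.2.1 hv.2.2.1
    have hsub : ({(p, b), (p, !b)} : Finset (Bool × Bool)) ⊆ ({hub t v, v} : Finset _).image R := by
      intro z hz
      simp only [Finset.mem_insert, Finset.mem_singleton] at hz
      rcases hz with rfl | rfl
      · rw [← hRh0, ← hhub]
        exact Finset.mem_image_of_mem R (by simp)
      · rw [← hv.2.2.2]
        exact Finset.mem_image_of_mem R (by simp)
    have hneq : ((p, b) : Bool × Bool) ≠ (p, !b) := by simp
    have h2 : 2 ≤ (({hub t v, v} : Finset _).image R).card := by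
      calc 2 = ({(p, b), (p, !b)} : Finset (Bool × Bool)).card := (Finset.card_pair hneq).symm
        _ ≤ _ := Finset.card_le_card hsub
    omega
  calc t ≤ B'.card := hB'card
    _ = D.card := hDcard.symm
    _ = ∑ e ∈ D, 1 := by simp
    _ ≤ ∑ e ∈ D, ((e.image R).card - 1) := Finset.sum_le_sum hDone
    _ ≤ ∑ e ∈ E t, ((e.image R).card - 1) := Finset.sum_le_sum_of_subset hDE


end RBB

/-- **Recursive bipartitioning can be a factor `Θ(n)` off the optimum.**
There are constants `c > 0` and `C` such that for infinitely many `n` divisible by `12`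
there is a hypergraph on `n` nodes which (a) admits a perfectly balanced `4`-way
partitioning of connectivity cost at most `C`, (b) admits a bisection of connectivity
cost `0`, while (c) every minimum-cost bisection, refined in any way into four parts of
size `n/4` each, yields a `4`-way partitioning of connectivity cost at least `c·n`. -/
theorem recursive_bipartitioning_bad :
    ∃ c : ℝ, 0 < c ∧ ∃ C : ℕ, ∀ N : ℕ, ∃ n : ℕ, N ≤ n ∧ 12 ∣ n ∧
      ∃ E : Finset (Finset (Fin n)),
        (∃ P : Fin n → Fin 4,
          (∀ i : Fin 4, (Finset.univ.filter fun a => P a = i).card = n / 4) ∧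
          (∑ e ∈ E, ((e.image P).card - 1)) ≤ C) ∧
        (∃ P : Fin n → Bool,
          (∀ i : Bool, (Finset.univ.filter fun a => P a = i).card = n / 2) ∧
          (∑ e ∈ E, ((e.image P).card - 1)) = 0) ∧
        (∀ P : Fin n → Bool,
          (∀ i : Bool, (Finset.univ.filter fun a => P a = i).card = n / 2) →
          (∀ Q : Fin n → Bool,
            (∀ i : Bool, (Finset.univ.filter fun a => Q a = i).card = n / 2) →
            (∑ e ∈ E, ((e.image P).card - 1)) ≤ ∑ e ∈ E, ((e.image Q).card - 1)) →
          ∀ R : Fin n → Bool × Bool,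
            (∀ x : Fin n, (R x).1 = P x) →
            (∀ v : Bool × Bool, (Finset.univ.filter fun a => R a = v).card = n / 4) →
            c * n ≤ ((∑ e ∈ E, ((e.image R).card - 1) : ℕ) : ℝ)) := by
  refine ⟨1/24, by norm_num, 6, fun N => ?_⟩
  have ht : 1 ≤ N + 1 := by omega
  refine ⟨24*(N+1), by omega, ⟨2*(N+1), by ring⟩, RBB.E (N+1), ?_, ?_, ?_⟩
  · refine ⟨RBB.P4 (N+1), fun i => ?_, RBB.cost_P4 (N+1) ht⟩
    rw [RBB.P4_balanced (N+1) ht i]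
    omega
  · refine ⟨RBB.P2 (N+1), fun i => ?_, RBB.cost_P2_zero (N+1) ht⟩
    rw [RBB.P2_balanced (N+1) ht i]
    omega
  · intro P hPbal hmin R hR1 hR4
    have hc0 : (∑ e ∈ RBB.E (N+1), ((e.image P).card - 1)) = 0 := by
      have hm := hmin (RBB.P2 (N+1)) (fun i => by rw [RBB.P2_balanced (N+1) ht i]; omega)
      rw [RBB.cost_P2_zero (N+1) ht] at hm
      omega
    have hP12 : ∀ i, ((univ : Finset (Fin (24*(N+1)))).filter fun a => P a = i).card
        = 12*(N+1) := by
      intro i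
      rw [hPbal i]
      omega
    have hR6 : ∀ v, ((univ : Finset (Fin (24*(N+1)))).filter fun a => R a = v).card
        = 6*(N+1) := by
      intro v
      rw [hR4 v]
      omega
    have hmain := RBB.part_c (N+1) ht P hP12 hc0 R hR1 hR6
    have hcast : ((N+1 : ℕ) : ℝ) ≤ ((∑ e ∈ RBB.E (N+1), ((e.image R).card - 1) : ℕ) : ℝ) :=
      Nat.cast_le.mpr hmain
    push_cast at hcast ⊢
    linarith
end

section
/- Let t ≥ 1 and b be positive integers and a_1, …, a_{3t} positive integers with ∑_{i=1}^{3t} a_i = t·b and b/4 < a_i < b/2 for all i. Construct a DAG D with a fixed processor assignment p : V → {1, 2} as follows: a 'main' directed path of 2tb nodes whose processor assignment alternates in runs of length b, starting with b nodes on processor 1, then b nodes on processor 2, and so on; and, for each i ∈ [3t], a disjoint directed path of 2a_i nodes consisting of a_i nodes on processor 2 followed by a_i nodes on processor 1. Then D admits a schedule respecting p with makespan 2tb if and only if the multiset {a_1, …, a_{3t}} can be partitioned into t triples each summing to b. -/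
/-!
The main path has `2tb` nodes, so within makespan `2tb` its node `j` runs at time `j + 1`, and on
each processor it occupies every other block of `b` consecutive time slots. Hence the
processor-2 halves of the small chains run in the even blocks and their processor-1 halves in the
odd blocks. If chain `i` has switched processor by time `2jb`, its processor-2 half ran in the
`j` even blocks before that time; if not, its processor-1 half runs in the `t - j` odd blocks
after it. Since `∑ a i = tb`, the chains switched by time `2jb` have total length exactly `jb`,
so grouping the chains by the pair of blocks in which they switch gives groups summing to `b`,
which are triples because `b/4 < a i < b/2`. Conversely, the chains of a triple can be run back to
back in the free slots of one pair of blocks.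
-/

open Finset

/-- The arc relation of the 3-partition scheduling DAG: a main directed path on
`2·t·b` nodes, together with, for each `i`, a disjoint directed path on `2·(a i)`
nodes. -/
def tpArc (t b : ℕ) (a : Fin (3 * t) → ℕ) :
    (Fin (2 * t * b) ⊕ (Σ i : Fin (3 * t), Fin (2 * a i))) →
    (Fin (2 * t * b) ⊕ (Σ i : Fin (3 * t), Fin (2 * a i))) → Prop
  | Sum.inl j, Sum.inl j' => (j' : ℕ) = (j : ℕ) + 1
  | Sum.inr ⟨i, x⟩, Sum.inr ⟨i', x'⟩ => (i : ℕ) = (i' : ℕ) ∧ (x' : ℕ) = (x : ℕ) + 1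
  | _, _ => False

/-- The fixed processor assignment: the main path alternates in runs of length `b`,
starting with `b` nodes on processor `1`, then `b` nodes on processor `2`, and so on;
the `i`-th small path consists of `a i` nodes on processor `2` followed by `a i` nodes
on processor `1`. -/
def tpProc (t b : ℕ) (a : Fin (3 * t) → ℕ) :
    (Fin (2 * t * b) ⊕ (Σ i : Fin (3 * t), Fin (2 * a i))) → ℕ
  | Sum.inl j => if (j : ℕ) / b % 2 = 0 then 1 else 2
  | Sum.inr ⟨i, x⟩ => if (x : ℕ) < a i then 2 else 1

theorem add_sub_le_of_lt_succ {N : ℕ} {g : Fin N → ℕ}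
    (hg : ∀ k (hk : k + 1 < N), g ⟨k, by omega⟩ < g ⟨k + 1, hk⟩) {m n : Fin N} (hmn : m ≤ n) :
    g m + (n - m : ℕ) ≤ g n := by
  obtain ⟨m, hm⟩ := m
  obtain ⟨n, hn⟩ := n
  rw [Fin.mk_le_mk] at hmn
  induction n, hmn using Nat.le_induction with
  | base => simp
  | succ n hmn ih =>
    have := ih (by omega)
    have := hg n hn
    simp only at *
    omega

theorem card_eq_three_of_sum_eq {ι : Type*} {s : Finset ι} {a : ι → ℕ} {b : ℕ} (hb : 0 < b)
    (hlo : ∀ i ∈ s, b < 4 * a i) (hhi : ∀ i ∈ s, 2 * a i < b) (hs : ∑ i ∈ s, a i = b) :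
    #s = 3 := by
  have hne : s.Nonempty := nonempty_of_sum_ne_zero (hs ▸ hb.ne')
  have h4 : #s * b < 4 * b :=
    calc #s * b = ∑ _i ∈ s, b := by simp
      _ < ∑ i ∈ s, 4 * a i := sum_lt_sum_of_nonempty hne hlo
      _ = 4 * b := by rw [← mul_sum, hs]
  have h2 : 2 * b < #s * b :=
    calc 2 * b = ∑ i ∈ s, 2 * a i := by rw [← mul_sum, hs]
      _ < ∑ _i ∈ s, b := sum_lt_sum_of_nonempty hne hhi
      _ = #s * b := by simp
  have := Nat.lt_of_mul_lt_mul_right h4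
  have := Nat.lt_of_mul_lt_mul_right h2
  omega

theorem sum_filter_eq_of_sum_filter_lt {ι : Type*} (s : Finset ι) (g a : ι → ℕ) {j b : ℕ}
    (hj : ∑ i ∈ s with g i < j, a i = j * b)
    (hj' : ∑ i ∈ s with g i < j + 1, a i = (j + 1) * b) :
    ∑ i ∈ s with g i = j, a i = b := by
  rw [← sum_filter_add_sum_filter_not _ (g · < j), filter_filter, filter_filter,
    filter_congr (p := fun i => g i < j + 1 ∧ g i < j) (q := (g · < j)) (by intros; omega),
    filter_congr (p := fun i => g i < j + 1 ∧ ¬g i < j) (q := (g · = j)) (by intros; omega),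
    hj] at hj'
  linarith

/-- For `r < 2`, the time slots `s ∈ [2mb, 2nb)` whose block `s / b` has parity `r`. -/
def blockSlots (b r m n : ℕ) : Finset ℕ :=
  (Ico m n ×ˢ range b).image fun p => (2 * p.1 + r) * b + p.2

theorem mem_blockSlots {b r m n s : ℕ} (hr : s / b % 2 = r) (hm : 2 * m * b ≤ s)
    (hn : s < 2 * n * b) : s ∈ blockSlots b r m n := by
  have hb : 0 < b := Nat.pos_of_ne_zero (by rintro rfl; simp at hn)
  refine mem_image.2 ⟨(s / b / 2, s % b), ?_, ?_⟩
  · simp only [mem_product, mem_Ico, mem_range]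
    refine ⟨⟨?_, ?_⟩, Nat.mod_lt _ hb⟩
    · rw [Nat.le_div_iff_mul_le two_pos, Nat.le_div_iff_mul_le hb]
      linarith
    · rw [Nat.div_lt_iff_lt_mul two_pos, Nat.div_lt_iff_lt_mul hb]
      linarith
  · rw [← hr, Nat.div_add_mod, Nat.div_add_mod']

theorem card_blockSlots_le (b r m n : ℕ) : #(blockSlots b r m n) ≤ (n - m) * b :=
  card_image_le.trans (by simp)

section FiberOffset

variable {ι κ : Type*} [Fintype ι] [LinearOrder ι] [DecidableEq κ] (f : ι → κ) (a : ι → ℕ)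

def fiberOffset (i : ι) : ℕ :=
  ∑ k with f k = f i ∧ k < i, a k

theorem fiberOffset_add_le_sum {i : ι} {s : Finset ι} (hs : ∀ k, f k = f i → k ≤ i → k ∈ s) :
    fiberOffset f a i + a i ≤ ∑ k ∈ s, a k := by
  rw [fiberOffset, add_comm, ← sum_insert (by simp)]
  refine sum_le_sum_of_subset fun k hk => ?_
  rcases mem_insert.1 hk with rfl | hk
  · exact hs k rfl le_rfl
  · simp only [mem_filter, mem_univ, true_and] at hk
    exact hs k hk.1 hk.2.le

theorem fiberOffset_add_le_sum_fiber (i : ι) :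
    fiberOffset f a i + a i ≤ ∑ k with f k = f i, a k :=
  fiberOffset_add_le_sum f a fun k hk _ => by simpa using hk

theorem fiberOffset_add_le_of_lt {i i' : ι} (hf : f i = f i') (hi : i < i') :
    fiberOffset f a i + a i ≤ fiberOffset f a i' :=
  fiberOffset_add_le_sum f a fun k hk hki => by simpa [hk, hf] using hki.trans_lt hi

theorem eq_of_fiberOffset_add_eq {i i' : ι} {c c' : ℕ} (hf : f i = f i') (hc : c < a i)
    (hc' : c' < a i') (h : fiberOffset f a i + c = fiberOffset f a i' + c') : i = i' := by
  rcases lt_trichotomy i i' with hi | hi | hi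
  · have := fiberOffset_add_le_of_lt f a hf hi
    omega
  · exact hi
  · have := fiberOffset_add_le_of_lt f a hf.symm hi
    omega

end FiberOffset

abbrev TPNode (t b : ℕ) (a : Fin (3 * t) → ℕ) :=
  Fin (2 * t * b) ⊕ (Σ i : Fin (3 * t), Fin (2 * a i))

structure IsTPSchedule (t b : ℕ) (a : Fin (3 * t) → ℕ) (τ : TPNode t b a → ℕ) : Prop where
  one_le : ∀ v, 1 ≤ τ v
  ne_of_tpProc_eq : ∀ u v, u ≠ v → tpProc t b a u = tpProc t b a v → τ u ≠ τ v
  lt_of_tpArc : ∀ u v, tpArc t b a u v → τ u < τ v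
  le_makespan : ∀ v, τ v ≤ 2 * t * b

section

variable {t b : ℕ} {a : Fin (3 * t) → ℕ}

theorem card_filter_tpProc_inr (i : Fin (3 * t)) {c : ℕ} (hc : c = 1 ∨ c = 2) :
    #{x : Fin (2 * a i) | tpProc t b a (.inr ⟨i, x⟩) = c} = a i := by
  have hlow : #{x : Fin (2 * a i) | (x : ℕ) < a i} = a i := by
    rw [Fin.card_filter_val_lt]
    omega
  rcases hc with rfl | rfl
  · have := card_filter_add_card_filter_not (s := univ) fun x : Fin (2 * a i) => (x : ℕ) < a i
    rw [hlow, card_univ, Fintype.card_fin] at this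
    simpa [tpProc] using (by omega : #{x : Fin (2 * a i) | ¬(x : ℕ) < a i} = a i)
  · simpa [tpProc] using hlow

def tpSwitch (hpos : ∀ i, 0 < a i) (i : Fin (3 * t)) : Fin (2 * a i) :=
  ⟨a i, by have := hpos i; omega⟩

namespace IsTPSchedule

variable {τ : TPNode t b a → ℕ}

theorem apply_inl (hτ : IsTPSchedule t b a τ) (j : Fin (2 * t * b)) : τ (.inl j) = j + 1 := by
  have hstep : ∀ k (hk : k + 1 < 2 * t * b), τ (.inl ⟨k, by omega⟩) < τ (.inl ⟨k + 1, hk⟩) :=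
    fun k hk => hτ.lt_of_tpArc _ _ rfl
  have hN : 0 < 2 * t * b := j.pos
  have hfirst := add_sub_le_of_lt_succ (g := fun k => τ (.inl k)) hstep
    (show ⟨0, hN⟩ ≤ j from Fin.le_def.2 (Nat.zero_le _))
  have hlast := add_sub_le_of_lt_succ (g := fun k => τ (.inl k)) hstep
    (show j ≤ ⟨2 * t * b - 1, by omega⟩ from Fin.le_def.2 (by simp; omega))
  have := hτ.one_le (.inl ⟨0, hN⟩)
  have := hτ.le_makespan (.inl ⟨2 * t * b - 1, by omega⟩)
  simp only at hfirst hlast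
  omega

theorem add_sub_le_apply_inr (hτ : IsTPSchedule t b a τ) (i : Fin (3 * t)) {x x' : Fin (2 * a i)}
    (h : x ≤ x') : τ (.inr ⟨i, x⟩) + (x' - x : ℕ) ≤ τ (.inr ⟨i, x'⟩) :=
  add_sub_le_of_lt_succ (g := fun x => τ (.inr ⟨i, x⟩)) (fun _ _ => hτ.lt_of_tpArc _ _ ⟨rfl, rfl⟩) h

theorem apply_inr_sub_one_div_mod_two (hτ : IsTPSchedule t b a τ) (i : Fin (3 * t))
    (x : Fin (2 * a i)) : (τ (.inr ⟨i, x⟩) - 1) / b % 2 = if (x : ℕ) < a i then 0 else 1 := by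
  have h₁ := hτ.one_le (.inr ⟨i, x⟩)
  have hs : τ (.inr ⟨i, x⟩) - 1 < 2 * t * b := by
    have := hτ.le_makespan (.inr ⟨i, x⟩)
    omega
  have hne := hτ.ne_of_tpProc_eq (.inl ⟨_, hs⟩) (.inr ⟨i, x⟩) Sum.inl_ne_inr
  rw [hτ.apply_inl, Fin.val_mk, Nat.sub_add_cancel h₁] at hne
  simp only [tpProc] at hne
  split_ifs at hne ⊢ <;> omega

theorem sum_le_card (hτ : IsTPSchedule t b a τ) (S : Finset (Fin (3 * t))) {c : ℕ}
    (hc : c = 1 ∨ c = 2) (T : Finset ℕ)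
    (hT : ∀ i ∈ S, ∀ x, tpProc t b a (.inr ⟨i, x⟩) = c → τ (.inr ⟨i, x⟩) - 1 ∈ T) :
    ∑ i ∈ S, a i ≤ #T :=
  calc ∑ i ∈ S, a i = #(S.sigma fun i => {x | tpProc t b a (.inr ⟨i, x⟩) = c}) := by
        rw [card_sigma]
        exact sum_congr rfl fun i _ => (card_filter_tpProc_inr i hc).symm
    _ ≤ #T := by
      refine card_le_card_of_injOn (fun v => τ (.inr v) - 1) ?_ ?_
      · rintro ⟨i, x⟩ hv
        simp only [coe_sigma, Set.mem_sigma_iff, mem_coe, mem_filter, mem_univ, true_and] at hv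
        exact hT i hv.1 x hv.2
      · rintro ⟨i, x⟩ hv ⟨i', x'⟩ hv' he
        simp only [coe_sigma, Set.mem_sigma_iff, mem_coe, mem_filter, mem_univ, true_and] at hv hv'
        by_contra hne
        refine hτ.ne_of_tpProc_eq _ _ (fun h => hne (Sum.inr_injective h))
          (hv.2.trans hv'.2.symm) ?_
        have := hτ.one_le (.inr ⟨i, x⟩)
        have := hτ.one_le (.inr ⟨i', x'⟩)
        simp only at he
        omega

theorem sum_filter_tpSwitch_le_eq_mul (hτ : IsTPSchedule t b a τ) (hpos : ∀ i, 0 < a i)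
    (hsum : ∑ i, a i = t * b) {j : ℕ} (hj : j ≤ t) :
    ∑ i with τ (.inr ⟨i, tpSwitch hpos i⟩) ≤ 2 * j * b, a i = j * b := by
  set S : Finset (Fin (3 * t)) := {i | τ (.inr ⟨i, tpSwitch hpos i⟩) ≤ 2 * j * b}
  have hS : ∑ i ∈ S, a i ≤ j * b := by
    refine (hτ.sum_le_card S (Or.inr rfl) (blockSlots b 0 0 j) fun i hi x hx => ?_).trans
      ((card_blockSlots_le _ _ _ _).trans (by simp))
    have hx : (x : ℕ) < a i := by simpa [tpProc] using hx
    have hpar := hτ.apply_inr_sub_one_div_mod_two i x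
    rw [if_pos hx] at hpar
    have hlt := hτ.add_sub_le_apply_inr i (x' := tpSwitch hpos i) (Fin.le_def.2 hx.le)
    have := (mem_filter.1 hi).2
    simp only [tpSwitch] at hlt this
    refine mem_blockSlots hpar (by simp) (by omega)
  have hSc : ∑ i ∈ Sᶜ, a i ≤ (t - j) * b := by
    refine (hτ.sum_le_card Sᶜ (Or.inl rfl) (blockSlots b 1 j t) fun i hi x hx => ?_).trans
      (card_blockSlots_le _ _ _ _)
    have hx : a i ≤ (x : ℕ) := by simpa [tpProc] using hx
    have hpar := hτ.apply_inr_sub_one_div_mod_two i x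
    rw [if_neg hx.not_gt] at hpar
    have hle := hτ.add_sub_le_apply_inr i (x := tpSwitch hpos i) (x' := x) (Fin.le_def.2 hx)
    have := hτ.le_makespan (.inr ⟨i, x⟩)
    have : ¬ _ := (mem_filter.not.1 (mem_compl.1 hi))
    simp only [tpSwitch, mem_univ, true_and, not_le] at hle this
    refine mem_blockSlots hpar (by omega) (by omega)
  have := sum_add_sum_compl S a
  have : j * b ≤ t * b := Nat.mul_le_mul_right _ hj
  rw [Nat.sub_mul] at hSc
  omega

theorem exists_sum_fiber_eq (hτ : IsTPSchedule t b a τ) (hb : 0 < b) (hpos : ∀ i, 0 < a i)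
    (hsum : ∑ i, a i = t * b) : ∃ f : Fin (3 * t) → Fin t, ∀ j, ∑ i with f i = j, a i = b := by
  set g : Fin (3 * t) → ℕ := fun i => (τ (.inr ⟨i, tpSwitch hpos i⟩) - 1) / (2 * b)
  have hg : ∀ i j, g i < j ↔ τ (.inr ⟨i, tpSwitch hpos i⟩) ≤ 2 * j * b := fun i j => by
    have := hτ.one_le (.inr ⟨i, tpSwitch hpos i⟩)
    rw [Nat.div_lt_iff_lt_mul (by omega), show j * (2 * b) = 2 * j * b by ring]
    omega
  have hsum_lt : ∀ j ≤ t, ∑ i with g i < j, a i = j * b := fun j hj => by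
    simpa only [hg] using hτ.sum_filter_tpSwitch_le_eq_mul hpos hsum hj
  refine ⟨fun i => ⟨g i, (hg i t).2 (hτ.le_makespan _)⟩, fun j => ?_⟩
  simpa [Fin.ext_iff] using
    sum_filter_eq_of_sum_filter_lt univ g a (hsum_lt j j.is_le') (hsum_lt (j + 1) j.isLt)

end IsTPSchedule

/-- Chain `i` runs its processor-2 half in block `2 f(i)` and its processor-1 half in block
`2 f(i) + 1`, the blocks in which the main path leaves these processors free; the chains of one
triple follow each other within the block. -/
def tpSchedule (t b : ℕ) (a : Fin (3 * t) → ℕ) (f : Fin (3 * t) → Fin t) : TPNode t b a → ℕ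
  | .inl j => j + 1
  | .inr ⟨i, x⟩ =>
    if (x : ℕ) < a i then 2 * f i * b + (fiberOffset f a i + x) + 1
    else (2 * f i + 1) * b + (fiberOffset f a i + (x - a i)) + 1

section tpSchedule

variable {f : Fin (3 * t) → Fin t}

theorem tpSchedule_inr_sub_one_div_mod (hoff : ∀ i, fiberOffset f a i + a i ≤ b)
    (i : Fin (3 * t)) (x : Fin (2 * a i)) :
    (tpSchedule t b a f (.inr ⟨i, x⟩) - 1) / b = 2 * f i + (if (x : ℕ) < a i then 0 else 1) ∧
    (tpSchedule t b a f (.inr ⟨i, x⟩) - 1) % b =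
      fiberOffset f a i + (if (x : ℕ) < a i then (x : ℕ) else x - a i) := by
  have := hoff i
  have := x.isLt
  refine (Nat.div_mod_unique (by omega)).2 ⟨?_, by split_ifs <;> omega⟩
  simp only [tpSchedule]
  split_ifs <;> rw [Nat.add_sub_cancel] <;> ring

theorem tpSchedule_ne_of_tpProc_eq (hoff : ∀ i, fiberOffset f a i + a i ≤ b) (u v : TPNode t b a)
    (huv : u ≠ v) (hp : tpProc t b a u = tpProc t b a v) :
    tpSchedule t b a f u ≠ tpSchedule t b a f v := by
  have hmixed : ∀ j i x, tpProc t b a (.inl j) = tpProc t b a (.inr ⟨i, x⟩) →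
      tpSchedule t b a f (.inl j) ≠ tpSchedule t b a f (.inr ⟨i, x⟩) := by
    intro j i x hp he
    have hdiv := (tpSchedule_inr_sub_one_div_mod hoff i x).1
    rw [← he] at hdiv
    simp only [tpSchedule, Nat.add_sub_cancel] at hdiv
    simp only [tpProc, hdiv] at hp
    split_ifs at hp <;> omega
  rcases u with j | ⟨i, x⟩ <;> rcases v with j' | ⟨i', x'⟩
  · exact fun he => huv (congrArg _ (Fin.ext (by simpa [tpSchedule] using he)))
  · exact hmixed j i' x' hp
  · exact fun he => hmixed j' i x hp.symm he.symm
  intro he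
  obtain ⟨hdiv, hmod⟩ := tpSchedule_inr_sub_one_div_mod hoff i x
  obtain ⟨hdiv', hmod'⟩ := tpSchedule_inr_sub_one_div_mod hoff i' x'
  rw [he] at hdiv hmod
  have hx := x.isLt
  have hx' := x'.isLt
  simp only [tpProc] at hp
  have hfi : f i = f i' := Fin.ext (by split_ifs at hdiv hdiv' hp <;> omega)
  obtain rfl : i = i' := eq_of_fiberOffset_add_eq f a hfi
    (c := if (x : ℕ) < a i then (x : ℕ) else x - a i)
    (c' := if (x' : ℕ) < a i' then (x' : ℕ) else x' - a i')
    (by split_ifs <;> omega) (by split_ifs <;> omega) (hmod.symm.trans hmod')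
  have : x = x' := Fin.ext (by split_ifs at hmod hmod' hp <;> omega)
  exact huv (by rw [this])

theorem tpSchedule_lt_of_tpArc (hoff : ∀ i, fiberOffset f a i + a i ≤ b) (u v : TPNode t b a)
    (h : tpArc t b a u v) : tpSchedule t b a f u < tpSchedule t b a f v := by
  rcases u with j | ⟨i, x⟩ <;> rcases v with j' | ⟨i', x'⟩
  · simp only [tpArc, tpSchedule] at h ⊢
    omega
  · exact h.elim
  · exact h.elim
  obtain ⟨hi, hx⟩ := h
  obtain rfl := Fin.ext hi
  have := hoff i
  simp only [tpSchedule, add_mul, one_mul]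
  split_ifs <;> omega

theorem isTPSchedule_tpSchedule (hf : ∀ j, ∑ i with f i = j, a i = b) :
    IsTPSchedule t b a (tpSchedule t b a f) := by
  have hoff i : fiberOffset f a i + a i ≤ b := (fiberOffset_add_le_sum_fiber f a i).trans (hf _).le
  refine ⟨fun v => ?_, tpSchedule_ne_of_tpProc_eq hoff, tpSchedule_lt_of_tpArc hoff, fun v => ?_⟩
  · rcases v with j | ⟨i, x⟩
    · exact Nat.le_add_left _ _
    · simp only [tpSchedule]
      split_ifs <;> exact Nat.le_add_left _ _
  · rcases v with j | ⟨i, x⟩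
    · simp only [tpSchedule]
      omega
    · have := hoff i
      have := x.isLt
      have : (2 * f i + 2) * b ≤ 2 * t * b := Nat.mul_le_mul_right _ (by omega)
      simp only [tpSchedule, add_mul, one_mul] at this ⊢
      split_ifs <;> omega

end tpSchedule

end

theorem three_partition_scheduling_general (t b : ℕ) (hb : 0 < b)
    (a : Fin (3 * t) → ℕ)
    (hsum : ∑ i, a i = t * b) (hlo : ∀ i, b < 4 * a i) (hhi : ∀ i, 2 * a i < b) :
    (∃ τ : (Fin (2 * t * b) ⊕ (Σ i : Fin (3 * t), Fin (2 * a i))) → ℕ,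
      (∀ v, 1 ≤ τ v) ∧
      (∀ u v, u ≠ v → tpProc t b a u = tpProc t b a v → τ u ≠ τ v) ∧
      (∀ u v, tpArc t b a u v → τ u < τ v) ∧
      (∀ v, τ v ≤ 2 * t * b)) ↔
    (∃ f : Fin (3 * t) → Fin t, ∀ j : Fin t,
      (Finset.univ.filter fun i => f i = j).card = 3 ∧
      ∑ i ∈ Finset.univ.filter (fun i => f i = j), a i = b) := by
  constructor
  · rintro ⟨τ, h₁, h₂, h₃, h₄⟩
    have hpos i : 0 < a i := by have := hlo i; omega
    obtain ⟨f, hf⟩ := IsTPSchedule.exists_sum_fiber_eq ⟨h₁, h₂, h₃, h₄⟩ hb hpos hsum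
    exact ⟨f, fun j =>
      ⟨card_eq_three_of_sum_eq hb (fun i _ => hlo i) (fun i _ => hhi i) (hf j), hf j⟩⟩
  · rintro ⟨f, hf⟩
    obtain ⟨h₁, h₂, h₃, h₄⟩ := isTPSchedule_tpSchedule fun j => (hf j).2
    exact ⟨tpSchedule t b a f, h₁, h₂, h₃, h₄⟩

/-- **Correctness of the 3-partition scheduling reduction.**  For positive `t`, `b` and
positive integers `a 0, …, a (3t-1)` with `∑ a i = t·b` and `b/4 < a i < b/2`, the above
DAG admits a schedule respecting the fixed processor assignment with makespan `2·t·b`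
iff the multiset `{a i}` can be partitioned into `t` triples each summing to `b`. -/
theorem three_partition_scheduling (t b : ℕ) (ht : 0 < t) (hb : 0 < b)
    (a : Fin (3 * t) → ℕ) (hpos : ∀ i, 0 < a i)
    (hsum : ∑ i, a i = t * b) (hlo : ∀ i, b < 4 * a i) (hhi : ∀ i, 2 * a i < b) :
    (∃ τ : (Fin (2 * t * b) ⊕ (Σ i : Fin (3 * t), Fin (2 * a i))) → ℕ,
      (∀ v, 1 ≤ τ v) ∧
      (∀ u v, u ≠ v → tpProc t b a u = tpProc t b a v → τ u ≠ τ v) ∧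
      (∀ u v, tpArc t b a u v → τ u < τ v) ∧
      (∀ v, τ v ≤ 2 * t * b)) ↔
    (∃ f : Fin (3 * t) → Fin t, ∀ j : Fin t,
      (Finset.univ.filter fun i => f i = j).card = 3 ∧
      ∑ i ∈ Finset.univ.filter (fun i => f i = j), a i = b) :=
  three_partition_scheduling_general t b hb a hsum hlo hhi
end

section
/- Let a_1, …, a_m ∈ {0,1}^D be binary vectors. Consider the hypergraph with node set {u_i : i ∈ [m]} ∪ {v_i^{(j)} : i ∈ [m], j ∈ [D]} and, for each i ∈ [m], the hyperedge e_i = {u_i} ∪ {v_i^{(j)} : a_i^{(j)} = 1}. Then the following are equivalent: (1) there exists a set R of nodes such that every hyperedge e_i satisfies e_i ⊆ R or e_i ∩ R = ∅, at least two of the nodes u_1, …, u_m belong to R, and for every j ∈ [D] at most one of the nodes v_1^{(j)}, …, v_m^{(j)} belongs to R; (2) there exist indices i₁ ≠ i₂ in [m] such that the vectors a_{i₁} and a_{i₂} are orthogonal, i.e., a_{i₁}^{(j)} · a_{i₂}^{(j)} = 0 for every j ∈ [D]. -/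
/-- **Correctness of the Orthogonal Vectors reduction.**  Given binary vectors
`a 1, …, a m ∈ {0,1}^D`, build the hypergraph with an anchor node `u i = Sum.inl i` for
every vector and a node `v i j = Sum.inr (i, j)` for every vector `i` and dimension `j`,
and for each `i` the hyperedge `e i = {u i} ∪ {v i j : a i j = 1}`.  Then there is a set
`R` of nodes such that every hyperedge is monochromatic (contained in `R` or disjoint
from it), at least two anchor nodes lie in `R`, and for every dimension `j` at most one
of the nodes `v 1 j, …, v m j` lies in `R`, if and only if two distinct vectors are
orthogonal. -/
theorem orthogonal_vectors_reduction (m D : ℕ) (a : Fin m → Fin D → Bool) :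
    (∃ R : Set (Fin m ⊕ Fin m × Fin D),
      (∀ i : Fin m,
        (insert (Sum.inl i) {x | ∃ j : Fin D, a i j = true ∧ x = Sum.inr (i, j)} :
          Set (Fin m ⊕ Fin m × Fin D)) ⊆ R ∨
        (insert (Sum.inl i) {x | ∃ j : Fin D, a i j = true ∧ x = Sum.inr (i, j)} :
          Set (Fin m ⊕ Fin m × Fin D)) ∩ R = ∅) ∧
      (∃ i₁ i₂ : Fin m, i₁ ≠ i₂ ∧ Sum.inl i₁ ∈ R ∧ Sum.inl i₂ ∈ R) ∧
      (∀ j : Fin D, ∀ i i' : Fin m, Sum.inr (i, j) ∈ R → Sum.inr (i', j) ∈ R → i = i')) ↔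
    (∃ i₁ i₂ : Fin m, i₁ ≠ i₂ ∧ ∀ j : Fin D, a i₁ j = false ∨ a i₂ j = false) := by
  constructor
  · rintro ⟨R, hmono, ⟨i₁, i₂, hne, h1, h2⟩, hdim⟩
    refine ⟨i₁, i₂, hne, fun j => ?_⟩
    by_contra hc
    push_neg at hc
    obtain ⟨ha1, ha2⟩ := hc
    simp only [Bool.not_eq_false] at ha1 ha2
    have hs1 : Sum.inr (i₁, j) ∈ R := by
      rcases hmono i₁ with h | h
      · exact h (Or.inr ⟨j, ha1, rfl⟩)
      · exact absurd (Set.eq_empty_iff_forall_notMem.mp h (Sum.inl i₁)) (by simp [h1])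
    have hs2 : Sum.inr (i₂, j) ∈ R := by
      rcases hmono i₂ with h | h
      · exact h (Or.inr ⟨j, ha2, rfl⟩)
      · exact absurd (Set.eq_empty_iff_forall_notMem.mp h (Sum.inl i₂)) (by simp [h2])
    exact hne (hdim j i₁ i₂ hs1 hs2)
  · rintro ⟨i₁, i₂, hne, horth⟩
    set e : Fin m → Set (Fin m ⊕ Fin m × Fin D) := fun i =>
      insert (Sum.inl i) {x | ∃ j : Fin D, a i j = true ∧ x = Sum.inr (i, j)} with he
    have hmem : ∀ k i (j : Fin D), Sum.inr (i, j) ∈ e k ↔ i = k ∧ a k j = true := by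
      intro k i j
      simp only [he, Set.mem_insert_iff, Set.mem_setOf_eq]
      constructor
      · rintro (h | ⟨j', haj, h⟩)
        · exact absurd h (by simp)
        · obtain ⟨rfl, rfl⟩ := Prod.mk.injEq .. ▸ Sum.inr.inj h
          exact ⟨rfl, haj⟩
      · rintro ⟨rfl, haj⟩; exact Or.inr ⟨j, haj, rfl⟩
    refine ⟨e i₁ ∪ e i₂, fun i => ?_, ⟨i₁, i₂, hne, Or.inl (Or.inl rfl), Or.inr (Or.inl rfl)⟩, ?_⟩
    · by_cases h1 : i = i₁
      · exact Or.inl (h1 ▸ Set.subset_union_left)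
      by_cases h2 : i = i₂
      · exact Or.inl (h2 ▸ Set.subset_union_right)
      · right
        ext x
        simp only [Set.mem_inter_iff, Set.mem_empty_iff_false, iff_false, not_and,
          Set.mem_union]
        rintro (rfl | ⟨j, haj, rfl⟩)
        · rintro ((h | ⟨j', _, h⟩) | (h | ⟨j', _, h⟩)) <;> simp_all
        · rintro (h | h)
          · exact h1 ((hmem i₁ i j).mp h).1
          · exact h2 ((hmem i₂ i j).mp h).1
    · rintro j i i' (hi | hi) (hi' | hi')
      · exact ((hmem i₁ i j).mp hi).1.trans ((hmem i₁ i' j).mp hi').1.symm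
      · obtain ⟨_, hb1⟩ := (hmem i₁ i j).mp hi
        obtain ⟨_, hb2⟩ := (hmem i₂ i' j).mp hi'
        rcases horth j with h | h <;> simp_all
      · obtain ⟨_, hb1⟩ := (hmem i₂ i j).mp hi
        obtain ⟨_, hb2⟩ := (hmem i₁ i' j).mp hi'
        rcases horth j with h | h <;> simp_all
      · exact ((hmem i₂ i j).mp hi).1.trans ((hmem i₂ i' j).mp hi').1.symm
end

section
/- Let G = (V, E) be a graph. Consider the hypergraph with nodes w_{v,e,i} for every v ∈ V, every edge e ∈ E incident to v, and every color i ∈ {1,2,3}, together with additional nodes ŵ_{v,i,1} and ŵ_{v,i,2} for every v ∈ V and i ∈ {1,2,3}; its hyperedges are, for each v ∈ V and i ∈ {1,2,3}, the set h_{v,i} = {w_{v,e,i} : e ∈ E incident to v} ∪ {ŵ_{v,i,1}, ŵ_{v,i,2}}. Then the following are equivalent: (1) there exists a set R of nodes such that every hyperedge h_{v,i} satisfies h_{v,i} ⊆ R or h_{v,i} ∩ R = ∅, for every v ∈ V at most one of ŵ_{v,1,1}, ŵ_{v,2,1}, ŵ_{v,3,1} belongs to R, for every v ∈ V at least one of ŵ_{v,1,2},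 ŵ_{v,2,2}, ŵ_{v,3,2} belongs to R, and for every edge e = {u,v} ∈ E and every color i ∈ {1,2,3} at most one of w_{u,e,i}, w_{v,e,i} belongs to R; (2) G admits a proper 3-coloring (an assignment of colors {1,2,3} to V such that adjacent vertices receive different colors). -/
/-- Incidence pairs of a graph: a vertex together with an edge containing it; the nodes
`w_{v,e,i}` of the reduction hypergraph are such pairs tagged by a color `i ∈ {1,2,3}`. -/
abbrev IncPair {V : Type*} (G : SimpleGraph V) :=
  {p : V × Sym2 V // p.2 ∈ G.edgeSet ∧ p.1 ∈ p.2}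

/-- The node type of the reduction hypergraph: the nodes `w_{v,e,i}` (left) and the
nodes `ŵ_{v,i,1}, ŵ_{v,i,2}` (right). -/
abbrev ColNode {V : Type*} (G : SimpleGraph V) := (IncPair G × Fin 3) ⊕ (V × Fin 3 × Fin 2)

/-- The hyperedge `h_{v,i} = {w_{v,e,i} : e ∈ E incident to v} ∪ {ŵ_{v,i,1}, ŵ_{v,i,2}}`. -/
def colEdge {V : Type*} (G : SimpleGraph V) (v : V) (i : Fin 3) : Set (ColNode G) :=
  {x | ∃ w : IncPair G, w.1.1 = v ∧ x = Sum.inl (w, i)} ∪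
    {Sum.inr (v, i, 0), Sum.inr (v, i, 1)}

/-- **Correctness of the 3-coloring reduction.**  There is a set `R` of nodes of the
reduction hypergraph such that every hyperedge `h_{v,i}` is monochromatic (contained in
`R` or disjoint from it), for every `v` at most one of `ŵ_{v,1,1}, ŵ_{v,2,1}, ŵ_{v,3,1}`
lies in `R`, for every `v` at least one of `ŵ_{v,1,2}, ŵ_{v,2,2}, ŵ_{v,3,2}` lies in
`R`, and for every edge `e = {u,v}` and color `i` at most one of `w_{u,e,i}, w_{v,e,i}`
lies in `R`, if and only if `G` admits a proper 3-coloring. -/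
theorem three_coloring_reduction {V : Type*} [Fintype V] [DecidableEq V]
    (G : SimpleGraph V) :
    (∃ R : Set (ColNode G),
      (∀ (v : V) (i : Fin 3), colEdge G v i ⊆ R ∨ colEdge G v i ∩ R = ∅) ∧
      (∀ (v : V) (i i' : Fin 3),
        Sum.inr (v, i, (0 : Fin 2)) ∈ R → Sum.inr (v, i', (0 : Fin 2)) ∈ R → i = i') ∧
      (∀ v : V, ∃ i : Fin 3, Sum.inr (v, i, (1 : Fin 2)) ∈ R) ∧
      (∀ (w w' : IncPair G) (i : Fin 3), w.1.2 = w'.1.2 → w ≠ w' →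
        ¬(Sum.inl (w, i) ∈ R ∧ Sum.inl (w', i) ∈ R))) ↔
    (∃ col : V → Fin 3, ∀ u v : V, G.Adj u v → col u ≠ col v) := by
  constructor
  · rintro ⟨R, hmono, _hat0, hat1, hedge⟩
    choose col hcol using hat1
    refine ⟨col, fun u v huv hcuv => ?_⟩
    set i := col u with hi
    -- the hyperedge h_{u,i} contains ŵ_{u,i,2} ∈ R, so it is contained in R
    have hmemu : (Sum.inr (u, i, 1) : ColNode G) ∈ colEdge G u i := by
      right; right; rfl
    have hsubu : colEdge G u i ⊆ R := by
      rcases hmono u i with h | h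
      · exact h
      · exact absurd (Set.eq_empty_iff_forall_notMem.mp h _ ⟨hmemu, hcol u⟩) (by simp)
    have hmemv : (Sum.inr (v, i, 1) : ColNode G) ∈ colEdge G v i := by
      right; right; rfl
    have hsubv : colEdge G v i ⊆ R := by
      rcases hmono v i with h | h
      · exact h
      · exact absurd (Set.eq_empty_iff_forall_notMem.mp h _
          ⟨hmemv, hcuv ▸ hcol v⟩) (by simp)
    have hne : u ≠ v := G.ne_of_adj huv
    have he : s(u, v) ∈ G.edgeSet := huv
    set w : IncPair G := ⟨(u, s(u, v)), he, Sym2.mem_mk_left u v⟩ with hw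
    set w' : IncPair G := ⟨(v, s(u, v)), he, Sym2.mem_mk_right u v⟩ with hw'
    have hwR : (Sum.inl (w, i) : ColNode G) ∈ R :=
      hsubu (Or.inl ⟨w, rfl, rfl⟩)
    have hw'R : (Sum.inl (w', i) : ColNode G) ∈ R :=
      hsubv (Or.inl ⟨w', rfl, rfl⟩)
    exact hedge w w' i rfl (fun h => hne (congrArg (fun x => x.1.1) h)) ⟨hwR, hw'R⟩
  · rintro ⟨col, hcol⟩
    refine ⟨{x | (Sum.elim (fun p => col p.1.1.1 = p.2) (fun q => col q.1 = q.2.1) x)},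
      ?_, ?_, ?_, ?_⟩
    · intro v i
      by_cases h : col v = i
      · left
        rintro x (⟨w, hw1, rfl⟩ | hx)
        · simpa [Set.mem_setOf_eq, hw1] using h
        · rcases hx with rfl | rfl <;> simpa using h
      · right
        ext x
        simp only [Set.mem_inter_iff, Set.mem_empty_iff_false, iff_false]
        rintro ⟨(⟨w, hw1, rfl⟩ | hx), hxR⟩
        · exact h (hw1 ▸ hxR)
        · rcases hx with rfl | rfl <;> exact h hxR
    · intro v i i' h1 h2
      simp only [Set.mem_setOf_eq, Sum.elim_inr] at h1 h2
      exact h1 ▸ h2 ▸ rfl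
    · intro v; exact ⟨col v, rfl⟩
    · rintro w w' i he hne ⟨h1, h2⟩
      simp only [Set.mem_setOf_eq, Sum.elim_inl] at h1 h2
      -- w.1.1 and w'.1.1 are both members of the same edge, and distinct
      have hvne : w.1.1 ≠ w'.1.1 := by
        intro h
        apply hne
        exact Subtype.ext (Prod.ext h he)
      have hmem := w.2.2
      have hmem' := w'.2.2
      rw [he] at hmem
      have hedge := w'.2.1
      obtain ⟨y, hy⟩ := Sym2.mem_iff_exists.mp hmem'
      rw [hy] at hmem
      rcases Sym2.mem_iff.mp hmem with h | rfl
      · exact hvne h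
      · have hadj : G.Adj w'.1.1 w.1.1 := by
          have := w'.2.1; rw [hy] at this; exact this
        exact hcol _ _ hadj (h2.trans h1.symm)
end
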